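/- arXiv:2308.08400 — 9 statements merged into one kernel-verified Lean document; each statement's English description precedes it below -/
import Mathlib

section
/- Let X and Y be real Banach spaces and let U : X → Y be a local isometry, i.e. every point x ∈ X has an open neighborhood V such that the restriction of U to V is a distance-preserving map from V onto an open subset of Y. Then U is an isometry: U is bijective and ‖U(x) − U(y)‖ = ‖x − y‖ for all x, y ∈ X. -/
/-!
Lipschitz paths lift through a local isometry `f` of a complete space: lifts are unique (local
injectivity and connectedness) and `L`-Lipschitz when the path is, so by completeness a lift over
`[0, T)` extends to `T`, and a local inverse of `f` extends it beyond `T`. Lifting from `x₀` the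
segment from `f x₀` to `y` and taking its endpoint gives a right inverse `g` of `f`. Along the
compact lift of one segment `f` preserves distances at a uniform scale, so the lifts of nearby
segments stay at the distance of the segments themselves: `g` is again a local isometry. Local
isometries of normed spaces are `1`-Lipschitz (chain along segments), so `f` and `g` are, and
since `g ∘ f` and `id` are continuous lifts of `f` that agree at `x₀`, `g ∘ f = id`.
-/

open Set Filter Metric Topology
open scoped NNReal

section Metric

variable {X Y : Type*} [PseudoMetricSpace X] [PseudoMetricSpace Y]

def DistPreservingOn (f : X → Y) (s : Set X) : Prop :=
  ∀ u ∈ s, ∀ v ∈ s, dist (f u) (f v) = dist u v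

def IsLocallyIsometric (f : X → Y) : Prop :=
  ∀ x, ∃ V ∈ 𝓝 x, DistPreservingOn f V

variable {f : X → Y}

theorem DistPreservingOn.mono {s t : Set X} (h : DistPreservingOn f t) (hst : s ⊆ t) :
    DistPreservingOn f s :=
  fun u hu v hv => h u (hst hu) v (hst hv)

theorem IsLocallyIsometric.exists_pos_forall_distPreservingOn_ball (hf : IsLocallyIsometric f)
    {K : Set X} (hK : IsCompact K) : ∃ δ > 0, ∀ x ∈ K, DistPreservingOn f (ball x δ) := by
  choose V hV hfV using hf
  obtain ⟨δ, hδ, hcov⟩ := lebesgue_number_lemma_of_metric hK (c := fun x => interior (V x))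
    (fun _ => isOpen_interior) (fun x _ => mem_iUnion.2 ⟨x, mem_interior_iff_mem_nhds.2 (hV x)⟩)
  refine ⟨δ, hδ, fun x hx => ?_⟩
  obtain ⟨i, hi⟩ := hcov x hx
  exact (hfV i).mono (hi.trans interior_subset)

theorem IsPreconnected.dist_le_of_distPreservingOn_ball {A : Type*} [TopologicalSpace A]
    {s : Set A} (hs : IsPreconnected s) {η η' : A → X} (hη : ContinuousOn η s)
    (hη' : ContinuousOn η' s) {a : A} (ha : a ∈ s) (h₀ : η a = η' a) {δ c : ℝ}
    (hδ : ∀ t ∈ s, DistPreservingOn f (ball (η t) δ))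
    (hc : ∀ t ∈ s, dist (f (η t)) (f (η' t)) ≤ c) (hcδ : c < δ) :
    ∀ t ∈ s, dist (η t) (η' t) ≤ c := by
  let d : A → ℝ := fun t => dist (η t) (η' t)
  have hgap : ∀ t ∈ s, d t < δ → d t ≤ c := fun t ht hlt => by
    simp only [d]
    rw [← hδ t ht _ (mem_ball_self (dist_nonneg.trans_lt hlt)) _ (by rwa [mem_ball, dist_comm])]
    exact hc t ht
  intro t ht
  by_contra! hct
  have hδt : δ ≤ d t := not_lt.1 fun hlt => (hgap t ht hlt).not_gt hct
  have hc0 : 0 ≤ c := dist_nonneg.trans (hc a ha)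
  -- the distance would have to jump over the gap `(c, δ)`
  obtain ⟨t', ht', hmid⟩ : (c + δ) / 2 ∈ d '' s :=
    (hs.image d (continuous_dist.comp_continuousOn (hη.prodMk hη'))).Icc_subset
      (show (0 : ℝ) ∈ d '' s from ⟨a, ha, by simp [d, h₀]⟩) ⟨t, ht, rfl⟩
      ⟨by linarith, by linarith⟩
  have := hgap t' ht' (by linarith)
  linarith

end Metric

theorem isLocalHomeomorph_of_distPreservingOn {X Y : Type*} [MetricSpace X] [PseudoMetricSpace Y]
    {f : X → Y} (h : ∀ x, ∃ V, IsOpen V ∧ x ∈ V ∧ DistPreservingOn f V ∧ IsOpen (f '' V)) :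
    IsLocalHomeomorph f :=
  isLocalHomeomorph_iff_isOpenEmbedding_restrict.2 fun x => by
    obtain ⟨V, hV, hxV, hfV, hfVo⟩ := h x
    refine ⟨V, hV.mem_nhds hxV,
      .mk (Isometry.of_dist_eq fun (u v : V) => hfV u u.2 v v.2).isEmbedding ?_⟩
    rwa [range_domRestrict]

section NormedDomain

variable {E X F : Type*} [NormedAddCommGroup E] [NormedSpace ℝ E] [PseudoMetricSpace X]
  [PseudoMetricSpace F]

theorem Convex.lipschitzOnWith_of_nhdsWithin {f : E → F} {s : Set E} {L : ℝ≥0}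
    (hs : Convex ℝ s) (hf : ∀ x ∈ s, ∃ t ∈ 𝓝[s] x, LipschitzOnWith L f t) :
    LipschitzOnWith L f s := by
  have hball : ∀ x ∈ s, ∃ ε > 0, LipschitzOnWith L f (ball x ε ∩ s) := fun x hx => by
    obtain ⟨t, ht, hft⟩ := hf x hx
    obtain ⟨ε, hε, hsub⟩ := Metric.mem_nhdsWithin_iff.1 ht
    exact ⟨ε, hε, hft.mono hsub⟩
  choose! ε hε hfε using hball
  refine LipschitzOnWith.of_dist_le_mul fun x hx y hy => ?_
  set p : ℝ → E := fun t => AffineMap.lineMap x y t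
  have hps : ∀ t ∈ Icc (0 : ℝ) 1, p t ∈ s := fun t ht => hs.lineMap_mem hx hy ht
  obtain ⟨δ, hδ, hcov⟩ := lebesgue_number_lemma_of_metric
    (isCompact_Icc.image (lipschitzWith_lineMap (𝕜 := ℝ) x y).continuous)
    (c := fun z : s => ball (z : E) (ε z)) (fun _ => isOpen_ball)
    (by
      rintro _ ⟨t, ht, rfl⟩
      exact mem_iUnion.2 ⟨⟨p t, hps t ht⟩, mem_ball_self (hε _ (hps t ht))⟩)
  obtain ⟨n, hn⟩ := exists_nat_gt (dist x y / δ)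
  have hn0 : (0 : ℝ) < n := (div_nonneg dist_nonneg hδ.le).trans_lt hn
  have hmem : ∀ i ≤ n, (i / n : ℝ) ∈ Icc (0 : ℝ) 1 := fun i hi =>
    ⟨by positivity, div_le_one_of_le₀ (by exact_mod_cast hi) hn0.le⟩
  have hstep : ∀ i < n, dist (f (p (i / n))) (f (p ((i + 1 : ℕ) / n))) ≤ L * (dist x y / n) := by
    intro i hi
    have hd : dist (p (i / n)) (p ((i + 1 : ℕ) / n)) = dist x y / n := by
      simp only [p, dist_lineMap_lineMap, Real.dist_eq]
      rw [Nat.cast_succ, ← sub_div, sub_add_cancel_left, abs_div, abs_neg, abs_one,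
        abs_of_pos hn0, one_div_mul_eq_div]
    obtain ⟨z, hz⟩ := hcov _ (mem_image_of_mem _ (hmem i hi.le))
    have hnext : p ((i + 1 : ℕ) / n) ∈ ball (p (i / n)) δ := by
      rw [mem_ball, dist_comm, hd, div_lt_iff₀ hn0]
      rwa [div_lt_iff₀ hδ, mul_comm] at hn
    rw [← hd]
    exact (hfε z z.2).dist_le_mul _ ⟨hz (mem_ball_self hδ), hps _ (hmem i hi.le)⟩
      _ ⟨hz hnext, hps _ (hmem (i + 1) hi)⟩
  calc dist (f x) (f y) = dist (f (p ((0 : ℕ) / n))) (f (p ((n : ℕ) / n))) := by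
        simp [p, div_self hn0.ne']
    _ ≤ ∑ i ∈ Finset.range n, dist (f (p (i / n))) (f (p ((i + 1 : ℕ) / n))) :=
        dist_le_range_sum_dist (fun i : ℕ => f (p (i / n))) n
    _ ≤ ∑ i ∈ Finset.range n, L * (dist x y / n) :=
        Finset.sum_le_sum fun i hi => hstep i (Finset.mem_range.1 hi)
    _ = L * dist x y := by
        rw [Finset.sum_const, Finset.card_range, nsmul_eq_mul]
        field_simp

theorem IsLocallyIsometric.lipschitzWith_one {f : E → F} (hf : IsLocallyIsometric f) :
    LipschitzWith 1 f := by
  rw [← lipschitzOnWith_univ]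
  refine convex_univ.lipschitzOnWith_of_nhdsWithin fun x _ => ?_
  obtain ⟨V, hV, hfV⟩ := hf x
  exact ⟨V, mem_nhdsWithin_of_mem_nhds hV,
    LipschitzOnWith.of_dist_le_mul fun u hu v hv => by simp [hfV u hu v hv]⟩

theorem IsLocallyIsometric.lipschitzOnWith_of_eqOn_comp {f : X → F} (hf : IsLocallyIsometric f)
    {s : Set E} (hs : Convex ℝ s) {η : E → X} {γ : E → F} {L : ℝ≥0}
    (hγ : LipschitzOnWith L γ s) (hη : ContinuousOn η s) (hηγ : EqOn (f ∘ η) γ s) :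
    LipschitzOnWith L η s := by
  refine hs.lipschitzOnWith_of_nhdsWithin fun x hx => ?_
  obtain ⟨V, hV, hfV⟩ := hf (η x)
  refine ⟨s ∩ η ⁻¹' V, inter_mem self_mem_nhdsWithin (hη x hx hV),
    LipschitzOnWith.of_dist_le_mul fun u hu v hv => ?_⟩
  calc dist (η u) (η v) = dist (f (η u)) (f (η v)) := (hfV _ hu.2 _ hv.2).symm
    _ = dist (γ u) (γ v) := by rw [← hηγ hu.1, ← hηγ hv.1]; rfl
    _ ≤ L * dist u v := hγ.dist_le_mul u hu.1 v hv.1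

end NormedDomain

section Lifting

theorem IsLocalHomeomorph.exists_gt_lift_Icc {X Y : Type*} [TopologicalSpace X]
    [TopologicalSpace Y] {f : X → Y} (hf : IsLocalHomeomorph f) {γ : ℝ → Y} (hγ : Continuous γ)
    {T : ℝ} (hT : 0 ≤ T) {η : ℝ → X} (hη : ContinuousOn η (Icc 0 T))
    (hηγ : EqOn (f ∘ η) γ (Icc 0 T)) :
    ∃ T' > T, ∃ η' : ℝ → X, ContinuousOn η' (Icc 0 T') ∧ η' 0 = η 0 ∧
      EqOn (f ∘ η') γ (Icc 0 T') := by
  obtain ⟨e, hTe, rfl⟩ := hf (η T)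
  have hγT : γ T = e (η T) := (hηγ ⟨hT, le_rfl⟩).symm
  obtain ⟨T', hTT', hsub⟩ := mem_nhdsGE_iff_exists_Icc_subset.1 (mem_nhdsWithin_of_mem_nhds
    (hγ.continuousAt.preimage_mem_nhds (e.open_target.mem_nhds (hγT ▸ e.map_source hTe))))
  refine ⟨T', hTT', fun t => if t ≤ T then η t else e.symm (γ t), ?_, if_pos hT, fun t ht => ?_⟩
  · rw [← Icc_union_Icc_eq_Icc hT hTT'.le]
    refine (hη.congr fun t ht => if_pos ht.2).union_of_isClosed
      ((e.continuousOn_symm.comp hγ.continuousOn hsub).congr fun t ht => ?_)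
      isClosed_Icc isClosed_Icc
    split_ifs with htT
    · rw [le_antisymm htT ht.1]
      change η T = e.symm (γ T)
      rw [hγT]
      exact (e.left_inv hTe).symm
    · rfl
  · dsimp only [Function.comp]
    split_ifs with htT
    · exact hηγ ⟨ht.1, htT⟩
    · exact e.right_inv (hsub ⟨(not_le.1 htT).le, ht.2⟩)

theorem LipschitzOnWith.exists_continuousOn_update_Icc {X : Type*} [PseudoMetricSpace X]
    [CompleteSpace X] {Φ : ℝ → X} {L : ℝ≥0} {a b : ℝ} (hab : a < b)
    (hΦ : LipschitzOnWith L Φ (Ico a b)) : ∃ p, ContinuousOn (Function.update Φ b p) (Icc a b) := by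
  have hcauchy : Cauchy (map Φ (𝓝[<] b)) :=
    ((cauchy_nhds (a := b)).mono nhdsWithin_le_nhds).map_of_le hΦ.uniformContinuousOn
      (le_principal_iff.2 (Ico_mem_nhdsLT hab))
  obtain ⟨p, hp⟩ := CompleteSpace.complete hcauchy
  refine ⟨p, fun t ht => ?_⟩
  rcases ht.2.eq_or_lt with rfl | htb
  · rw [continuousWithinAt_update_same, Icc_sdiff_right, nhdsWithin_Ico_eq_nhdsLT hab]
    exact hp
  · rw [continuousWithinAt_update_of_ne htb.ne]
    exact (hΦ.continuousOn t ⟨ht.1, htb⟩).mono_of_mem_nhdsWithin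
      (mem_nhdsWithin.2 ⟨Iio b, isOpen_Iio, htb, fun x hx => ⟨hx.2.1, hx.1⟩⟩)

variable {X Y : Type*} [MetricSpace X] [CompleteSpace X] [MetricSpace Y] {f : X → Y}

theorem IsLocallyIsometric.exists_lift_Icc_of_forall_lt (hf : IsLocallyIsometric f)
    (hf' : IsLocalHomeomorph f) {γ : ℝ → Y} {L : ℝ≥0} (hγ : LipschitzWith L γ) {x₀ : X}
    {T : ℝ} (hT : 0 < T)
    (h : ∀ t ∈ Ico 0 T, ∃ η : ℝ → X, ContinuousOn η (Icc 0 t) ∧ η 0 = x₀ ∧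
      EqOn (f ∘ η) γ (Icc 0 t)) :
    ∃ η : ℝ → X, ContinuousOn η (Icc 0 T) ∧ η 0 = x₀ ∧ EqOn (f ∘ η) γ (Icc 0 T) := by
  have : Nonempty X := ⟨x₀⟩
  choose! η hηc hη₀ hηγ using h
  -- lifts over nested intervals agree, so they glue to a lift `Φ` over `[0, T)`
  set Φ : ℝ → X := fun t => η t t
  have hΦη : ∀ t ∈ Ico 0 T, EqOn Φ (η t) (Icc 0 t) := fun t ht s hs => by
    have hs' : s ∈ Ico 0 T := ⟨hs.1, hs.2.trans_lt ht.2⟩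
    exact (T2Space.isSeparatedMap f).eqOn_of_comp_eqOn hf'.isLocallyInjective isPreconnected_Icc
      (hηc s hs') ((hηc t ht).mono (Icc_subset_Icc_right hs.2))
      (fun r hr => (hηγ s hs' hr).trans (hηγ t ht ⟨hr.1, hr.2.trans hs.2⟩).symm)
      (left_mem_Icc.2 hs.1) ((hη₀ s hs').trans (hη₀ t ht).symm) (right_mem_Icc.2 hs.1)
  have hΦL : LipschitzOnWith L Φ (Ico 0 T) := LipschitzOnWith.of_dist_le_mul fun u hu v hv => by
    have ht : max u v ∈ Ico 0 T := ⟨hu.1.trans (le_max_left _ _), max_lt hu.2 hv.2⟩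
    have hu' : u ∈ Icc 0 (max u v) := ⟨hu.1, le_max_left _ _⟩
    have hv' : v ∈ Icc 0 (max u v) := ⟨hv.1, le_max_right _ _⟩
    rw [hΦη _ ht hu', hΦη _ ht hv']
    exact (hf.lipschitzOnWith_of_eqOn_comp (convex_Icc _ _) hγ.lipschitzOnWith (hηc _ ht)
      (hηγ _ ht)).dist_le_mul u hu' v hv'
  obtain ⟨p, hp⟩ := hΦL.exists_continuousOn_update_Icc hT
  have hΦγ : EqOn (f ∘ Function.update Φ T p) γ (Ico 0 T) := fun t ht => by
    simp only [Function.comp, Function.update_of_ne ht.2.ne]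
    exact hηγ t ht (right_mem_Icc.2 ht.1)
  refine ⟨Function.update Φ T p, hp, ?_, hΦγ.of_subset_closure
    (hf'.continuous.comp_continuousOn hp) hγ.continuous.continuousOn Ico_subset_Icc_self
    (closure_Ico hT.ne).ge⟩
  rw [Function.update_of_ne hT.ne]
  exact hη₀ 0 ⟨le_rfl, hT⟩

theorem IsLocallyIsometric.exists_lift (hf : IsLocallyIsometric f) (hf' : IsLocalHomeomorph f)
    {γ : ℝ → Y} {L : ℝ≥0} (hγ : LipschitzWith L γ) {x₀ : X} (h₀ : f x₀ = γ 0) :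
    ∃ η : ℝ → X, ContinuousOn η (Icc 0 1) ∧ η 0 = x₀ ∧ EqOn (f ∘ η) γ (Icc 0 1) := by
  set P : ℝ → Prop := fun t =>
    ∃ η : ℝ → X, ContinuousOn η (Icc 0 t) ∧ η 0 = x₀ ∧ EqOn (f ∘ η) γ (Icc 0 t)
  have hP_anti : ∀ {s t}, s ≤ t → P t → P s := fun hst ⟨η, hηc, hη₀, hηγ⟩ =>
    ⟨η, hηc.mono (Icc_subset_Icc_right hst), hη₀, hηγ.mono (Icc_subset_Icc_right hst)⟩
  have hP₀ : P 0 := ⟨fun _ => x₀, continuousOn_const, rfl, fun t ht => by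
    rw [Icc_self, mem_singleton_iff] at ht
    rw [ht]
    exact h₀⟩
  -- the supremum `T` of the times up to which `γ` lifts is attained, and can then be exceeded
  by_contra h₁
  have hbdd : BddAbove {t | P t} := ⟨1, fun t ht => not_lt.1 fun h => h₁ (hP_anti h.le ht)⟩
  set T := sSup {t | P t}
  have hT₀ : 0 ≤ T := le_csSup hbdd hP₀
  obtain ⟨η, hηc, hη₀, hηγ⟩ : P T := by
    rcases hT₀.eq_or_lt with hT | hT
    · rwa [← hT]
    · refine hf.exists_lift_Icc_of_forall_lt hf' hγ hT fun t ht => ?_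
      obtain ⟨s, hs, hts⟩ := exists_lt_of_lt_csSup ⟨0, hP₀⟩ ht.2
      exact hP_anti hts.le hs
  obtain ⟨T', hTT', η', hη'c, hη'₀, hη'γ⟩ := hf'.exists_gt_lift_Icc hγ.continuous hT₀ hηc hηγ
  exact hTT'.not_ge (le_csSup hbdd ⟨η', hη'c, hη'₀.trans hη₀, hη'γ⟩)

end Lifting

section NormedSpace

variable {Y : Type*} [NormedAddCommGroup Y] [NormedSpace ℝ Y]

theorem IsLocallyIsometric.exists_rightInverse {X : Type*} [MetricSpace X] [CompleteSpace X]
    {f : X → Y} (hf : IsLocallyIsometric f) (hf' : IsLocalHomeomorph f) (x₀ : X) :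
    ∃ g : Y → X, IsLocallyIsometric g ∧ Function.RightInverse g f ∧ g (f x₀) = x₀ := by
  -- `g y` is the endpoint of the lift, starting at `x₀`, of the segment from `f x₀` to `y`
  choose η hηc hη₀ hηγ using fun y : Y =>
    hf.exists_lift hf' (lipschitzWith_lineMap (f x₀) y) (x₀ := x₀) (by simp)
  have h₁ : (1 : ℝ) ∈ Icc (0 : ℝ) 1 := right_mem_Icc.2 zero_le_one
  have hend : ∀ y, f (η y 1) = y := fun y => by simpa using hηγ y h₁
  refine ⟨fun y => η y 1, fun y => ?_, hend, ?_⟩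
  · obtain ⟨δ, hδ, hrad⟩ :=
      hf.exists_pos_forall_distPreservingOn_ball (isCompact_Icc.image_of_continuousOn (hηc y))
    have hnear : ∀ y' ∈ ball y δ, η y' 1 ∈ ball (η y 1) δ := fun y' hy' => by
      have hseg : ∀ t ∈ Icc (0 : ℝ) 1, dist (f (η y t)) (f (η y' t)) ≤ dist y y' := fun t ht => by
        rw [← Function.comp_apply (f := f), hηγ y ht, ← Function.comp_apply (f := f), hηγ y' ht,
          AffineMap.lineMap_apply_module', AffineMap.lineMap_apply_module', dist_add_right,
          dist_smul₀, dist_sub_right, Real.norm_of_nonneg ht.1]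
        exact mul_le_of_le_one_left dist_nonneg ht.2
      rw [mem_ball']
      exact (isPreconnected_Icc.dist_le_of_distPreservingOn_ball (hηc y) (hηc y')
        (left_mem_Icc.2 zero_le_one) ((hη₀ y).trans (hη₀ y').symm)
        (fun t ht => hrad _ (mem_image_of_mem _ ht)) hseg (mem_ball'.1 hy') 1 h₁).trans_lt
        (mem_ball'.1 hy')
    refine ⟨ball y δ, ball_mem_nhds y hδ, fun u hu v hv => ?_⟩
    rw [← hrad _ (mem_image_of_mem _ h₁) _ (hnear u hu) _ (hnear v hv), hend, hend]
  · -- the lift of a constant path is constant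
    exact (T2Space.isSeparatedMap f).eqOn_of_comp_eqOn hf'.isLocallyInjective isPreconnected_Icc
      (hηc (f x₀)) continuousOn_const (fun t ht => by simpa using hηγ (f x₀) ht)
      (left_mem_Icc.2 zero_le_one) (hη₀ _) h₁

theorem IsLocallyIsometric.bijective_and_isometry {X : Type*} [NormedAddCommGroup X]
    [NormedSpace ℝ X] [CompleteSpace X] {f : X → Y} (hf : IsLocallyIsometric f)
    (hf' : IsLocalHomeomorph f) : Function.Bijective f ∧ Isometry f := by
  obtain ⟨g, hg, hgf, hg₀⟩ := hf.exists_rightInverse hf' 0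
  have hg₁ : LipschitzWith 1 g := hg.lipschitzWith_one
  have hfg : Function.LeftInverse g f := congr_fun <|
    (T2Space.isSeparatedMap f).eq_of_comp_eq hf'.isLocallyInjective
      (hg₁.continuous.comp hf'.continuous) continuous_id (funext fun x => hgf (f x)) 0 hg₀
  refine ⟨⟨hfg.injective, hgf.surjective⟩, Isometry.of_dist_eq fun x x' => le_antisymm ?_ ?_⟩
  · simpa using hf.lipschitzWith_one.dist_le_mul x x'
  · simpa [hfg x, hfg x'] using hg₁.dist_le_mul (f x) (f x')

end NormedSpace

theorem local_isometry_is_isometry_general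
    {X Y : Type*} [NormedAddCommGroup X] [NormedSpace ℝ X] [CompleteSpace X]
    [NormedAddCommGroup Y] [NormedSpace ℝ Y]
    (U : X → Y)
    (hloc : ∀ x : X, ∃ V : Set X, IsOpen V ∧ x ∈ V ∧
      (∀ u ∈ V, ∀ v ∈ V, ‖U u - U v‖ = ‖u - v‖) ∧ IsOpen (U '' V)) :
    Function.Bijective U ∧ ∀ x y : X, ‖U x - U y‖ = ‖x - y‖ := by
  have hV : ∀ x, ∃ V, IsOpen V ∧ x ∈ V ∧ DistPreservingOn U V ∧ IsOpen (U '' V) := by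
    simpa only [DistPreservingOn, dist_eq_norm] using hloc
  have hU : IsLocallyIsometric U := fun x =>
    let ⟨V, hVo, hxV, hUV, _⟩ := hV x
    ⟨V, hVo.mem_nhds hxV, hUV⟩
  obtain ⟨hbij, hiso⟩ := hU.bijective_and_isometry (isLocalHomeomorph_of_distPreservingOn hV)
  exact ⟨hbij, by simpa only [dist_eq_norm] using hiso.dist_eq⟩

/-- Problem 155 of the Scottish Book for local isometries: a local isometry between
real Banach spaces (every point has an open neighborhood on which the map is
distance-preserving onto an open subset) is a surjective (indeed bijective) global isometry. -/
theorem local_isometry_is_isometry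
    {X Y : Type*} [NormedAddCommGroup X] [NormedSpace ℝ X] [CompleteSpace X]
    [NormedAddCommGroup Y] [NormedSpace ℝ Y] [CompleteSpace Y]
    (U : X → Y)
    (hloc : ∀ x : X, ∃ V : Set X, IsOpen V ∧ x ∈ V ∧
      (∀ u ∈ V, ∀ v ∈ V, ‖U u - U v‖ = ‖u - v‖) ∧ IsOpen (U '' V)) :
    Function.Bijective U ∧ ∀ x y : X, ‖U x - U y‖ = ‖x - y‖ :=
  local_isometry_is_isometry_general U hloc
end

section
/- Let X be a real Banach space and let σ : X × X × [0,1] → X be a convex bicombing, i.e. (i) for all x, y ∈ X the map σ_{xy} := σ(x, y, ·) satisfies ‖σ_{xy}(s) − σ_{xy}(t)‖ = |s − t|·‖x − y‖ for all s, t ∈ [0,1], σ_{xy}(0) = x and σ_{xy}(1) = y, and (ii) for all x, y, x′, y′ ∈ X the function t ↦ ‖σ_{xy}(t) − σ_{x′y′}(t)‖ is convex on [0,1]. Then σ(x, y, t) = (1−t)x + t y for all x, y ∈ X and t ∈ [0,1]. -/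
/-!
Convexity against the constant geodesics σ_zz ≡ z gives
2‖σ_xy((s+u)/2) - z‖ ≤ ‖σ_xy(s) - z‖ + ‖σ_xy(u) - z‖ for every z, and an inequality of this
kind for all z forces σ_xy((s+u)/2) to be the midpoint of σ_xy(s) and σ_xy(u). Indeed, write
p, q for the two points seen from it; at any u where the norm is differentiable, with
derivative φ, the function t ↦ ‖u + t p‖ + ‖u + t q‖ is minimal at t = 0, so φ(p + q) = 0 and
‖u‖ = φ(u) ≤ ‖u - (p + q)‖. Such u are dense in span{p, q} (Rademacher), so p + q = 0.

Hence σ_xy is continuous and midpoint-affine on [0, 1]. Its deviation from the linear segment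
vanishes at 0 and 1 and halves under t ↦ 2t or t ↦ 2t - 1, so it is bounded by C / 2ⁿ for
every n.
-/

open Set

section NormSmoothPoints

variable {V : Type*} [NormedAddCommGroup V] [NormedSpace ℝ V]

theorem HasFDerivAt.hasDerivAt_norm_add_smul {φ : V →L[ℝ] ℝ} {u : V}
    (h : HasFDerivAt (‖·‖) φ u) (v : V) :
    HasDerivAt (fun t : ℝ => ‖u + t • v‖) (φ v) 0 := by
  have hline : HasDerivAt (fun t : ℝ => u + t • v) v 0 := by
    simpa using ((hasDerivAt_id (0 : ℝ)).smul_const v).const_add u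
  exact (by simpa using h : HasFDerivAt (‖·‖) φ (u + (0 : ℝ) • v)).comp_hasDerivAt 0 hline

theorem two_mul_norm_le_norm_add_smul_add {p q : V}
    (h : ∀ w, 2 * ‖w‖ ≤ ‖p - w‖ + ‖q - w‖) (u : V) (t : ℝ) :
    2 * ‖u‖ ≤ ‖u + t • p‖ + ‖u + t • q‖ := by
  rcases eq_or_ne t 0 with rfl | ht
  · simp [two_mul]
  set w : V := -t⁻¹ • u
  have hw : t • w = -u := by simp [w, smul_smul, ht]
  have hshift : ∀ r : V, u + t • r = t • (r - w) := fun r => by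
    rw [smul_sub, hw, sub_neg_eq_add, add_comm]
  have hu : ‖u‖ = |t| * ‖w‖ := by rw [← norm_neg, ← hw, norm_smul, Real.norm_eq_abs]
  calc 2 * ‖u‖ = |t| * (2 * ‖w‖) := by rw [hu]; ring
    _ ≤ |t| * (‖p - w‖ + ‖q - w‖) := mul_le_mul_of_nonneg_left (h w) (abs_nonneg t)
    _ = ‖u + t • p‖ + ‖u + t • q‖ := by
      rw [hshift, hshift, norm_smul, norm_smul, Real.norm_eq_abs, mul_add]

theorem norm_le_norm_sub_add_of_differentiableAt_norm {p q u : V}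
    (h : ∀ w, 2 * ‖w‖ ≤ ‖p - w‖ + ‖q - w‖) (hu : DifferentiableAt ℝ (‖·‖) u) :
    ‖u‖ ≤ ‖u - (p + q)‖ := by
  set φ := fderiv ℝ (‖·‖) u
  have hmin : IsLocalMin (fun t : ℝ => ‖u + t • p‖ + ‖u + t • q‖) 0 :=
    Filter.Eventually.of_forall fun t => by
      simpa [two_mul] using two_mul_norm_le_norm_add_smul_add h u t
  have hpq : φ p + φ q = 0 := hmin.hasDerivAt_eq_zero
    ((hu.hasFDerivAt.hasDerivAt_norm_add_smul p).add (hu.hasFDerivAt.hasDerivAt_norm_add_smul q))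
  have hφ : ‖φ‖ ≤ 1 := by
    simpa using norm_fderiv_le_of_lipschitz ℝ (lipschitzWith_one_norm (E := V))
  calc ‖u‖ = φ u := hu.fderiv_norm_self.symm
    _ = φ (u - (p + q)) := by rw [map_sub, map_add, hpq, sub_zero]
    _ ≤ ‖φ‖ * ‖u - (p + q)‖ := (le_abs_self _).trans (φ.le_opNorm _)
    _ ≤ ‖u - (p + q)‖ := mul_le_of_le_one_left (norm_nonneg _) hφ

theorem add_eq_zero_of_forall_two_mul_norm_le [FiniteDimensional ℝ V] {p q : V}
    (h : ∀ w, 2 * ‖w‖ ≤ ‖p - w‖ + ‖q - w‖) : p + q = 0 := by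
  have hall : ∀ u : V, ‖u‖ ≤ ‖u - (p + q)‖ := fun u =>
    (isClosed_le (f := fun u : V => ‖u‖) (g := fun u => ‖u - (p + q)‖)
      (by fun_prop) (by fun_prop)).closure_subset_iff.2
      (fun _ hu => norm_le_norm_sub_add_of_differentiableAt_norm h hu)
      ((dense_differentiableAt_norm (E := V)).closure_eq ▸ mem_univ u)
  simpa using hall (p + q)

end NormSmoothPoints

theorem eq_midpoint_of_forall_two_mul_norm_sub_le {E : Type*} [NormedAddCommGroup E]
    [NormedSpace ℝ E] {m a b : E} (h : ∀ z, 2 * ‖m - z‖ ≤ ‖a - z‖ + ‖b - z‖) :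
    m = midpoint ℝ a b := by
  let W := Submodule.span ℝ {a - m, b - m}
  have hp : a - m ∈ W := Submodule.subset_span (by simp)
  have hq : b - m ∈ W := Submodule.subset_span (by simp)
  have := FiniteDimensional.span_of_finite ℝ (toFinite {a - m, b - m})
  have hW : (⟨a - m, hp⟩ + ⟨b - m, hq⟩ : W) = 0 := by
    refine add_eq_zero_of_forall_two_mul_norm_le fun w => ?_
    simpa [sub_sub, ← sub_add, norm_sub_rev m] using h (m + w)
  have hsum : a + b = (2 : ℝ) • m := by
    have := congrArg Subtype.val hW
    simp only [Submodule.coe_add, ZeroMemClass.coe_zero] at this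
    rw [two_smul]; linear_combination (norm := module) this
  rw [midpoint_eq_smul_add, hsum, smul_smul]; norm_num

section MidpointAffine

variable {E : Type*} [NormedAddCommGroup E] [NormedSpace ℝ E]

theorem exists_mem_Icc_eq_half_smul {g : ℝ → E} (h0 : g 0 = 0) (h1 : g 1 = 0)
    (hmid : ∀ s ∈ Icc (0 : ℝ) 1, ∀ u ∈ Icc (0 : ℝ) 1, g ((s + u) / 2) = midpoint ℝ (g s) (g u))
    {t : ℝ} (ht : t ∈ Icc (0 : ℝ) 1) : ∃ t' ∈ Icc (0 : ℝ) 1, g t = (2⁻¹ : ℝ) • g t' := by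
  obtain ⟨ht0, ht1⟩ := ht
  rcases le_total t 2⁻¹ with hle | hge
  · refine ⟨2 * t, ⟨by linarith, by linarith⟩, ?_⟩
    have := hmid 0 (left_mem_Icc.2 zero_le_one) (2 * t) ⟨by linarith, by linarith⟩
    rw [show (0 + 2 * t) / 2 = t by ring, h0, midpoint_eq_smul_add, zero_add] at this
    simpa using this
  · refine ⟨2 * t - 1, ⟨by linarith, by linarith⟩, ?_⟩
    have := hmid (2 * t - 1) ⟨by linarith, by linarith⟩ 1 (right_mem_Icc.2 zero_le_one)
    rw [show (2 * t - 1 + 1) / 2 = t by ring, h1, midpoint_eq_smul_add, add_zero] at this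
    simpa using this

theorem eqOn_zero_of_midpoint {g : ℝ → E} (hg : ContinuousOn g (Icc 0 1))
    (h0 : g 0 = 0) (h1 : g 1 = 0)
    (hmid : ∀ s ∈ Icc (0 : ℝ) 1, ∀ u ∈ Icc (0 : ℝ) 1, g ((s + u) / 2) = midpoint ℝ (g s) (g u)) :
    EqOn g 0 (Icc 0 1) := by
  obtain ⟨C, hC⟩ := isCompact_Icc.exists_bound_of_continuousOn hg
  have hpow : ∀ n : ℕ, ∀ t ∈ Icc (0 : ℝ) 1, 2 ^ n * ‖g t‖ ≤ C := by
    intro n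
    induction n with
    | zero => simpa using hC
    | succ n ih =>
      intro t ht
      obtain ⟨t', ht', hgt⟩ := exists_mem_Icc_eq_half_smul h0 h1 hmid ht
      calc 2 ^ (n + 1) * ‖g t‖ = 2 ^ n * ‖g t'‖ := by
            rw [hgt, norm_smul, Real.norm_eq_abs, abs_of_pos (by norm_num)]; ring
        _ ≤ C := ih t' ht'
  intro t ht
  by_contra hne
  have hpos : 0 < ‖g t‖ := norm_pos_iff.2 hne
  obtain ⟨n, hn⟩ := pow_unbounded_of_one_lt (C / ‖g t‖) one_lt_two
  exact (hpow n t ht).not_gt ((div_lt_iff₀ hpos).1 hn)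

theorem eqOn_lineMap_of_midpoint {f : ℝ → E} (hf : ContinuousOn f (Icc 0 1))
    (hmid : ∀ s ∈ Icc (0 : ℝ) 1, ∀ u ∈ Icc (0 : ℝ) 1, f ((s + u) / 2) = midpoint ℝ (f s) (f u)) :
    EqOn f (AffineMap.lineMap (f 0) (f 1)) (Icc 0 1) := by
  have hg := eqOn_zero_of_midpoint (g := fun t => f t - AffineMap.lineMap (f 0) (f 1) t)
    (hf.sub (AffineMap.lineMap_continuous.continuousOn)) (by simp) (by simp)
    (fun s hs u hu => by
      simp only [hmid s hs u hu, AffineMap.lineMap_apply_module, midpoint_eq_smul_add,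
        invOf_eq_inv]
      module)
  exact fun t ht => sub_eq_zero.1 (hg ht)

end MidpointAffine

theorem convex_bicombing_is_linear_general
    {X : Type*} [NormedAddCommGroup X] [NormedSpace ℝ X]
    (σ : X → X → ℝ → X)
    (hends : ∀ x y : X, σ x y 0 = x ∧ σ x y 1 = y)
    (hgeo : ∀ x y : X, ∀ s ∈ Set.Icc (0 : ℝ) 1, ∀ t ∈ Set.Icc (0 : ℝ) 1,
      ‖σ x y s - σ x y t‖ = |s - t| * ‖x - y‖)
    (hconv : ∀ x y x' y' : X,
      ConvexOn ℝ (Set.Icc (0 : ℝ) 1) (fun t => ‖σ x y t - σ x' y' t‖)) :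
    ∀ x y : X, ∀ t ∈ Set.Icc (0 : ℝ) 1, σ x y t = (1 - t) • x + t • y := by
  have hconst : ∀ z, ∀ t ∈ Icc (0 : ℝ) 1, σ z z t = z := fun z t ht => by
    simpa [(hends z z).1, sub_eq_zero] using hgeo z z t ht 0 (left_mem_Icc.2 zero_le_one)
  intro x y t ht
  have hmid : ∀ s ∈ Icc (0 : ℝ) 1, ∀ u ∈ Icc (0 : ℝ) 1,
      σ x y ((s + u) / 2) = midpoint ℝ (σ x y s) (σ x y u) := by
    intro s hs u hu
    refine eq_midpoint_of_forall_two_mul_norm_sub_le fun z => ?_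
    have hz : ConvexOn ℝ (Icc 0 1) (fun t => ‖σ x y t - z‖) :=
      (hconv x y z z).congr fun t ht => by simp only [hconst z t ht]
    have := hz.2 hs hu (by norm_num : (0 : ℝ) ≤ 2⁻¹) (by norm_num : (0 : ℝ) ≤ 2⁻¹) (by norm_num)
    simp only [smul_eq_mul, inv_mul_eq_div] at this
    rw [add_div]
    linarith
  have hcont : ContinuousOn (σ x y) (Icc 0 1) :=
    (LipschitzOnWith.of_dist_le_mul (K := ‖x - y‖₊) fun s hs u hu => by
      rw [dist_eq_norm, hgeo x y s hs u hu, Real.dist_eq, coe_nnnorm, mul_comm]).continuousOn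
  simpa [(hends x y).1, (hends x y).2, AffineMap.lineMap_apply_module]
    using eqOn_lineMap_of_midpoint hcont hmid ht

/-- Descombes–Lang: a convex bicombing on a real Banach space consists of the
linear segments. -/
theorem convex_bicombing_is_linear
    {X : Type*} [NormedAddCommGroup X] [NormedSpace ℝ X] [CompleteSpace X]
    (σ : X → X → ℝ → X)
    (hends : ∀ x y : X, σ x y 0 = x ∧ σ x y 1 = y)
    (hgeo : ∀ x y : X, ∀ s ∈ Set.Icc (0 : ℝ) 1, ∀ t ∈ Set.Icc (0 : ℝ) 1,
      ‖σ x y s - σ x y t‖ = |s - t| * ‖x - y‖)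
    (hconv : ∀ x y x' y' : X,
      ConvexOn ℝ (Set.Icc (0 : ℝ) 1) (fun t => ‖σ x y t - σ x' y' t‖)) :
    ∀ x y : X, ∀ t ∈ Set.Icc (0 : ℝ) 1, σ x y t = (1 - t) • x + t • y :=
  convex_bicombing_is_linear_general σ hends hgeo hconv
end

section
/- Let X be a real Banach space, let x, y ∈ X, t ∈ [0,1], and suppose p ∈ X satisfies ‖p − z‖ ≤ (1−t)·‖x − z‖ + t·‖y − z‖ for all z ∈ X. Then p = (1−t)x + t y. -/
/-!
Restrict to the finite-dimensional span of `x`, `y`, `p`, where the norm is differentiable on a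
dense set. Substituting `z = -ε⁻¹ • m` and scaling by `|ε|` turns the hypothesis into
`‖m + ε • p‖ ≤ (1 - t) ‖m + ε • x‖ + t ‖m + ε • y‖` for all `ε`, with equality at `ε = 0`.
So at a point `m` where the norm is differentiable, the left side minus the right side has a local
maximum at `ε = 0`, and the derivative `g` of the norm at `m` satisfies `g p = (1 - t) g x + t g y`,
i.e. `g` kills `c = p - ((1 - t) • x + t • y)`. But `g m = ‖m‖` and `‖g‖ ≤ 1` force `g c > 0`
as soon as `‖m - c‖ < ‖m‖`, which holds for points of differentiability close to `c ≠ 0`.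
-/

open Filter Metric

section

variable {E : Type*} [NormedAddCommGroup E] [NormedSpace ℝ E] {x y p : E} {t : ℝ}

theorem fderiv_norm_apply_le (m v : E) : fderiv ℝ (‖·‖) m v ≤ ‖v‖ :=
  calc fderiv ℝ (‖·‖) m v ≤ ‖fderiv ℝ (‖·‖) m‖ * ‖v‖ :=
      (Real.le_norm_self _).trans (ContinuousLinearMap.le_opNorm _ _)
    _ ≤ 1 * ‖v‖ := by
      gcongr
      exact_mod_cast norm_fderiv_le_of_lipschitz ℝ (lipschitzWith_one_norm (E := E))
    _ = ‖v‖ := one_mul _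

theorem DifferentiableAt.fderiv_norm_apply_pos {m c : E} (hm : DifferentiableAt ℝ (‖·‖) m)
    (hmc : ‖m - c‖ < ‖m‖) : 0 < fderiv ℝ (‖·‖) m c :=
  calc 0 < ‖m‖ - ‖m - c‖ := sub_pos.2 hmc
    _ ≤ fderiv ℝ (‖·‖) m m - fderiv ℝ (‖·‖) m (m - c) := by
      rw [hm.fderiv_norm_self]
      linarith [fderiv_norm_apply_le m (m - c)]
    _ = fderiv ℝ (‖·‖) m c := by simp

theorem exists_differentiableAt_norm_fderiv_apply_pos [FiniteDimensional ℝ E] {c : E}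
    (hc : c ≠ 0) : ∃ m, DifferentiableAt ℝ (‖·‖) m ∧ 0 < fderiv ℝ (‖·‖) m c := by
  obtain ⟨m, hm, hmc⟩ := dense_differentiableAt_norm.exists_mem_open isOpen_ball
    ⟨c, mem_ball_self (by positivity : 0 < ‖c‖ / 2)⟩
  refine ⟨m, hm, hm.fderiv_norm_apply_pos ?_⟩
  rw [mem_ball, dist_eq_norm] at hmc
  linarith [norm_sub_norm_le c m, norm_sub_rev c m]

theorem norm_add_smul_le_of_forall_norm_sub_le
    (h : ∀ z, ‖p - z‖ ≤ (1 - t) * ‖x - z‖ + t * ‖y - z‖) (m : E) (ε : ℝ) :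
    ‖m + ε • p‖ ≤ (1 - t) * ‖m + ε • x‖ + t * ‖m + ε • y‖ := by
  rcases eq_or_ne ε 0 with rfl | hε
  · simp only [zero_smul, add_zero]
    linarith
  · have hscale (w : E) : ‖m + ε • w‖ = |ε| * ‖w - (-ε⁻¹) • m‖ := by
      rw [← Real.norm_eq_abs, ← norm_smul, smul_sub, smul_smul, mul_neg, mul_inv_cancel₀ hε,
        neg_one_smul, sub_neg_eq_add, add_comm]
    rw [hscale, hscale, hscale]
    have := mul_le_mul_of_nonneg_left (h ((-ε⁻¹) • m)) (abs_nonneg ε)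
    linarith

theorem DifferentiableAt.fderiv_norm_apply_eq_of_forall_norm_sub_le {m : E}
    (hm : DifferentiableAt ℝ (‖·‖) m) (h : ∀ z, ‖p - z‖ ≤ (1 - t) * ‖x - z‖ + t * ‖y - z‖) :
    fderiv ℝ (‖·‖) m p = (1 - t) * fderiv ℝ (‖·‖) m x + t * fderiv ℝ (‖·‖) m y := by
  have hline (v : E) : HasDerivAt (fun ε : ℝ ↦ ‖m + ε • v‖) (fderiv ℝ (‖·‖) m v) 0 :=
    hm.hasFDerivAt.hasLineDerivAt v
  have hmin : IsLocalMin
      (fun ε : ℝ ↦ (1 - t) * ‖m + ε • x‖ + t * ‖m + ε • y‖ - ‖m + ε • p‖) 0 :=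
    Eventually.of_forall fun ε ↦ by
      simp only [zero_smul, add_zero]
      linarith [norm_add_smul_le_of_forall_norm_sub_le h m ε]
  have := hmin.hasDerivAt_eq_zero
    ((((hline x).const_mul (1 - t)).add ((hline y).const_mul t)).sub (hline p))
  linarith

theorem eq_of_forall_norm_sub_le_of_finiteDimensional [FiniteDimensional ℝ E]
    (h : ∀ z, ‖p - z‖ ≤ (1 - t) * ‖x - z‖ + t * ‖y - z‖) : p = (1 - t) • x + t • y := by
  by_contra hne
  obtain ⟨m, hm, hpos⟩ := exists_differentiableAt_norm_fderiv_apply_pos (sub_ne_zero.2 hne)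
  have := hm.fderiv_norm_apply_eq_of_forall_norm_sub_le h
  simp only [map_sub, map_add, map_smul, smul_eq_mul] at hpos
  linarith

end

theorem gaehler_murphy_general
    {X : Type*} [NormedAddCommGroup X] [NormedSpace ℝ X]
    (x y p : X) (t : ℝ)
    (h : ∀ z : X, ‖p - z‖ ≤ (1 - t) * ‖x - z‖ + t * ‖y - z‖) :
    p = (1 - t) • x + t • y := by
  let S := Submodule.span ℝ ({x, y, p} : Set X)
  have : FiniteDimensional ℝ S := .span_of_finite ℝ (Set.toFinite _)
  have mem {v : X} (hv : v ∈ ({x, y, p} : Set X)) : v ∈ S := Submodule.subset_span hv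
  have hS := eq_of_forall_norm_sub_le_of_finiteDimensional (E := S)
    (x := ⟨x, mem (by simp)⟩) (y := ⟨y, mem (by simp)⟩) (p := ⟨p, mem (by simp)⟩) (t := t)
    fun z ↦ h z
  simpa using congrArg Subtype.val hS

/-- Gähler–Murphy: in a real Banach space, if `‖p - z‖ ≤ (1-t)‖x - z‖ + t‖y - z‖` for
every `z`, then `p = (1-t)x + ty`. -/
theorem gaehler_murphy
    {X : Type*} [NormedAddCommGroup X] [NormedSpace ℝ X] [CompleteSpace X]
    (x y p : X) (t : ℝ) (ht : t ∈ Set.Icc (0 : ℝ) 1)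
    (h : ∀ z : X, ‖p - z‖ ≤ (1 - t) * ‖x - z‖ + t * ‖y - z‖) :
    p = (1 - t) • x + t • y :=
  gaehler_murphy_general x y p t h
end

section
/- Let X and Y be real Banach spaces and let U : X → Y be a continuous map which is locally affine, i.e. for every x₀ ∈ X there exists ε > 0 such that U((1−t)x₁ + t x₂) = (1−t)U(x₁) + t U(x₂) for all x₁, x₂ in the closed ball B(x₀, ε) and all t ∈ [0,1]. Then U is globally affine: U((1−t)x + t y) = (1−t)U(x) + t U(y) for all x, y ∈ X and all t ∈ [0,1]. -/
/-!
Restricted to the line through `x` and `y`, `U` gives a locally affine `g : ℝ → Y`. Near every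
point `g u = α + u • β`, so both `deriv g` and `u ↦ g u - u • deriv g u` are locally constant,
hence constant on the connected line `ℝ`; therefore `g` is affine.
-/

open Metric Set Filter Topology

def IsLocallyAffine {X Y : Type*} [SeminormedAddCommGroup X] [Module ℝ X] [AddCommGroup Y]
    [Module ℝ Y] (U : X → Y) : Prop :=
  ∀ x₀ : X, ∃ ε > (0 : ℝ), ∀ x₁ ∈ closedBall x₀ ε, ∀ x₂ ∈ closedBall x₀ ε,
    ∀ t ∈ Icc (0 : ℝ) 1, U ((1 - t) • x₁ + t • x₂) = (1 - t) • U x₁ + t • U x₂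

theorem IsLocallyConstant.of_forall_exists_eventually_eq {X Z : Type*} [TopologicalSpace X]
    {f : X → Z} (h : ∀ x, ∃ c, ∀ᶠ y in 𝓝 x, f y = c) : IsLocallyConstant f := by
  refine (IsLocallyConstant.iff_eventually_eq f).2 fun x => ?_
  obtain ⟨c, hc⟩ := h x
  filter_upwards [hc] with y hy
  rw [hy, hc.self_of_nhds]

namespace IsLocallyAffine

section Module

variable {X X' Y : Type*} [SeminormedAddCommGroup X] [Module ℝ X]
  [SeminormedAddCommGroup X'] [Module ℝ X'] [AddCommGroup Y] [Module ℝ Y] {U : X → Y}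

theorem comp_affineMap (hU : IsLocallyAffine U) (f : X' →ᵃ[ℝ] X) (hf : Continuous f) :
    IsLocallyAffine (U ∘ f) := by
  intro x₀
  obtain ⟨ε, hε, hU⟩ := hU (f x₀)
  obtain ⟨δ, hδ, hfδ⟩ := Metric.continuous_iff.1 hf x₀ ε hε
  have hmaps : MapsTo f (closedBall x₀ (δ / 2)) (closedBall (f x₀) ε) := fun x hx =>
    (hfδ x ((mem_closedBall.1 hx).trans_lt (half_lt_self hδ))).le
  refine ⟨δ / 2, half_pos hδ, fun x₁ hx₁ x₂ hx₂ t ht => ?_⟩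
  simp only [Function.comp_apply, Convex.combo_affine_apply (sub_add_cancel 1 t)]
  exact hU _ (hmaps hx₁) _ (hmaps hx₂) t ht

theorem exists_eventually_eq_add_smul {g : ℝ → Y} (hg : IsLocallyAffine g) (s : ℝ) :
    ∃ α β : Y, ∀ᶠ u in 𝓝 s, g u = α + u • β := by
  obtain ⟨ε, hε, hg⟩ := hg s
  have ha : s - ε ∈ closedBall s ε := by rw [Real.closedBall_eq_Icc]; constructor <;> linarith
  have hb : s + ε ∈ closedBall s ε := by rw [Real.closedBall_eq_Icc]; constructor <;> linarith
  set β := (2 * ε)⁻¹ • (g (s + ε) - g (s - ε))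
  refine ⟨g (s - ε) - (s - ε) • β, β, ?_⟩
  filter_upwards [closedBall_mem_nhds s hε] with u hu
  rw [Real.closedBall_eq_Icc, mem_Icc] at hu
  set τ := (u - (s - ε)) / (2 * ε)
  have hτ : τ ∈ Icc (0 : ℝ) 1 := by
    constructor
    · exact div_nonneg (by linarith) (by positivity)
    · rw [div_le_one (by positivity)]; linarith
  have hu_eq : (1 - τ) • (s - ε) + τ • (s + ε) = u := by
    simp only [smul_eq_mul, τ]; field_simp; ring
  rw [← hu_eq, hg _ ha _ hb τ hτ, hu_eq]
  simp only [β, τ, smul_smul, div_eq_mul_inv]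
  module

end Module

section Real

variable {Y : Type*} [NormedAddCommGroup Y] [NormedSpace ℝ Y] {g : ℝ → Y}

theorem exists_eventually_deriv_eq (hg : IsLocallyAffine g) (s : ℝ) :
    ∃ α β : Y, ∀ᶠ u in 𝓝 s, deriv g u = β ∧ g u = α + u • β := by
  obtain ⟨α, β, hαβ⟩ := hg.exists_eventually_eq_add_smul s
  refine ⟨α, β, ?_⟩
  filter_upwards [hαβ.eventually_nhds] with u hu
  have hderiv : HasDerivAt (fun w : ℝ => α + w • β) β u := by
    simpa using ((hasDerivAt_id u).smul_const β).const_add α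
  exact ⟨(hderiv.congr_of_eventuallyEq hu).deriv, hu.self_of_nhds⟩

theorem isLocallyConstant_deriv (hg : IsLocallyAffine g) : IsLocallyConstant (deriv g) :=
  .of_forall_exists_eventually_eq fun s =>
    let ⟨_, β, h⟩ := hg.exists_eventually_deriv_eq s
    ⟨β, h.mono fun _ hu => hu.1⟩

theorem isLocallyConstant_sub_smul_deriv (hg : IsLocallyAffine g) :
    IsLocallyConstant fun u => g u - u • deriv g u :=
  .of_forall_exists_eventually_eq fun s =>
    let ⟨α, _, h⟩ := hg.exists_eventually_deriv_eq s
    ⟨α, h.mono fun u hu => by rw [hu.2, hu.1, add_sub_cancel_right]⟩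

theorem eq_add_smul_deriv (hg : IsLocallyAffine g) (s : ℝ) : g s = g 0 + s • deriv g 0 := by
  have hα := hg.isLocallyConstant_sub_smul_deriv.apply_eq_of_preconnectedSpace s 0
  rw [hg.isLocallyConstant_deriv.apply_eq_of_preconnectedSpace s 0] at hα
  simp only [zero_smul, sub_zero] at hα
  rw [← hα, sub_add_cancel]

end Real

end IsLocallyAffine

theorem locally_affine_is_affine_general
    {X Y : Type*} [NormedAddCommGroup X] [NormedSpace ℝ X]
    [NormedAddCommGroup Y] [NormedSpace ℝ Y]
    (U : X → Y)
    (hloc : ∀ x₀ : X, ∃ ε > (0 : ℝ),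
      ∀ x₁ ∈ Metric.closedBall x₀ ε, ∀ x₂ ∈ Metric.closedBall x₀ ε,
        ∀ t ∈ Set.Icc (0 : ℝ) 1,
          U ((1 - t) • x₁ + t • x₂) = (1 - t) • U x₁ + t • U x₂) :
    ∀ x y : X, ∀ t ∈ Set.Icc (0 : ℝ) 1,
      U ((1 - t) • x + t • y) = (1 - t) • U x + t • U y := by
  intro x y t _
  have hline : IsLocallyAffine (U ∘ AffineMap.lineMap x y) :=
    IsLocallyAffine.comp_affineMap hloc _ AffineMap.lineMap_continuous
  have ht := hline.eq_add_smul_deriv t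
  have h1 := hline.eq_add_smul_deriv 1
  simp only [Function.comp_apply, AffineMap.lineMap_apply_module, sub_zero, zero_smul, one_smul,
    add_zero, sub_self, zero_add] at ht h1
  rw [ht, h1]
  module

/-- A continuous, locally affine map between real Banach spaces is globally affine. -/
theorem locally_affine_is_affine
    {X Y : Type*} [NormedAddCommGroup X] [NormedSpace ℝ X] [CompleteSpace X]
    [NormedAddCommGroup Y] [NormedSpace ℝ Y] [CompleteSpace Y]
    (U : X → Y) (hcont : Continuous U)
    (hloc : ∀ x₀ : X, ∃ ε > (0 : ℝ),
      ∀ x₁ ∈ Metric.closedBall x₀ ε, ∀ x₂ ∈ Metric.closedBall x₀ ε,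
        ∀ t ∈ Set.Icc (0 : ℝ) 1,
          U ((1 - t) • x₁ + t • x₂) = (1 - t) • U x₁ + t • U x₂) :
    ∀ x y : X, ∀ t ∈ Set.Icc (0 : ℝ) 1,
      U ((1 - t) • x + t • y) = (1 - t) • U x + t • U y :=
  locally_affine_is_affine_general U hloc
end

section
/- Let X and Y be real Banach spaces and let U : X → Y be a local isometry, i.e. every x ∈ X has an open neighborhood V such that U restricted to V is a distance-preserving map onto an open subset of Y. Then U is a homeomorphism: U is bijective, continuous, and U⁻¹ is continuous. -/
/-!
Segments of `Y` lift through `U` because `X` is complete: a maximal lift is Lipschitz, so it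
converges at its end, where a local inverse of `U` continues it. The endpoint of the lift of the
segment from `U x` to a fixed `y` is locally constant in `x`, since nearby lifts stay close along
the compact lifted path, on which `U` is isometric on balls of a uniform radius. On the connected
space `X` this endpoint is therefore constant, and it equals `x` whenever `U x = y`: hence `U` is
injective. The same lift puts a preimage of `y` within `‖y - U x‖` of `x`, so `U` is surjective
with a `1`-Lipschitz inverse.
-/

open Set Metric Filter Function Topology AffineMap
open scoped NNReal

section Lipschitz

variable {α : Type*} [PseudoMetricSpace α] {K : ℝ≥0}

theorem LipschitzOnWith.of_dist_le_mul_of_le {f : ℝ → α} {s : Set ℝ}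
    (h : ∀ x ∈ s, ∀ y ∈ s, x ≤ y → dist (f x) (f y) ≤ K * (y - x)) :
    LipschitzOnWith K f s := by
  refine LipschitzOnWith.of_dist_le_mul fun x hx y hy => ?_
  rcases le_total x y with hxy | hyx
  · simpa [Real.dist_eq, abs_of_nonpos (sub_nonpos.2 hxy)] using h x hx y hy hxy
  · simpa [dist_comm, Real.dist_eq, abs_of_nonneg (sub_nonneg.2 hyx)] using h y hy x hx hyx

theorem LipschitzOnWith.ite_Icc {f g : ℝ → α} {a b c : ℝ}
    (hf : LipschitzOnWith K f (Icc a b)) (hg : LipschitzOnWith K g (Icc b c)) (hfg : f b = g b) :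
    LipschitzOnWith K (fun t => if t ≤ b then f t else g t) (Icc a c) := by
  refine .of_dist_le_mul_of_le fun s hs t ht hst => ?_
  by_cases htb : t ≤ b
  · simpa [hst.trans htb, htb, Real.dist_eq, abs_of_nonpos (sub_nonpos.2 hst)] using
      hf.dist_le_mul s ⟨hs.1, hst.trans htb⟩ t ⟨ht.1, htb⟩
  by_cases hsb : s ≤ b
  · have h₁ := hf.dist_le_mul s ⟨hs.1, hsb⟩ b ⟨hs.1.trans hsb, le_rfl⟩
    have h₂ := hg.dist_le_mul b ⟨le_rfl, (not_le.1 htb).le.trans ht.2⟩ t ⟨(not_le.1 htb).le, ht.2⟩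
    rw [Real.dist_eq, abs_of_nonpos (sub_nonpos.2 hsb)] at h₁
    rw [Real.dist_eq, abs_of_nonpos (by linarith)] at h₂
    simp only [hsb, htb, if_true, if_false]
    calc dist (f s) (g t) ≤ dist (f s) (f b) + dist (g b) (g t) := hfg ▸ dist_triangle _ _ _
      _ ≤ K * (t - s) := by linarith
  · simpa [hsb, htb, Real.dist_eq, abs_of_nonpos (sub_nonpos.2 hst)] using
      hg.dist_le_mul s ⟨(not_le.1 hsb).le, hs.2⟩ t ⟨(not_le.1 htb).le, ht.2⟩

end Lipschitz

section MetricTarget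

variable {X Y : Type*} [MetricSpace X] [MetricSpace Y]

def IsometryOn (U : X → Y) (s : Set X) : Prop :=
  ∀ u ∈ s, ∀ v ∈ s, dist (U u) (U v) = dist u v

def IsLocalIsometry (U : X → Y) : Prop :=
  ∀ x, ∃ V : Set X, IsOpen V ∧ x ∈ V ∧ IsometryOn U V ∧ IsOpen (U '' V)

namespace IsometryOn

variable {U : X → Y} {W : Set X}

theorem injOn (hW : IsometryOn U W) : InjOn U W := fun u hu v hv huv =>
  dist_eq_zero.1 (by rw [← hW u hu v hv, huv, dist_self])

theorem lipschitzOnWith (hW : IsometryOn U W) : LipschitzOnWith 1 U W :=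
  .of_dist_le_mul fun u hu v hv => by rw [hW u hu v hv, NNReal.coe_one, one_mul]

theorem exists_extend_lift (hW : IsometryOn U W) {σ : ℝ → Y} {K : ℝ≥0} {γ : ℝ → X}
    {a b c : ℝ} (hab : a ≤ b) (hbc : b ≤ c) (hγ : LipschitzOnWith K γ (Icc a b))
    (hγU : EqOn (U ∘ γ) σ (Icc a b)) (hγW : γ b ∈ W) (hσ : LipschitzOnWith K σ (Icc b c))
    (hσW : MapsTo σ (Icc b c) (U '' W)) :
    ∃ γ' : ℝ → X, γ' a = γ a ∧ LipschitzOnWith K γ' (Icc a c) ∧ EqOn (U ∘ γ') σ (Icc a c) := by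
  have : Nonempty X := ⟨γ b⟩
  set ψ := invFunOn U W ∘ σ
  have hψW : MapsTo ψ (Icc b c) W := fun t ht => invFunOn_mem (hσW ht)
  have hψU : EqOn (U ∘ ψ) σ (Icc b c) := fun t ht => invFunOn_eq (hσW ht)
  have hψ : LipschitzOnWith K ψ (Icc b c) := .of_dist_le_mul fun s hs t ht => by
    rw [← hW _ (hψW hs) _ (hψW ht)]
    change dist ((U ∘ ψ) s) ((U ∘ ψ) t) ≤ _
    rw [hψU hs, hψU ht]
    exact hσ.dist_le_mul s hs t ht
  have hb : b ∈ Icc b c := ⟨le_rfl, hbc⟩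
  have hjoin : γ b = ψ b := hW.injOn hγW (hψW hb) ((hγU ⟨hab, le_rfl⟩).trans (hψU hb).symm)
  refine ⟨fun t => if t ≤ b then γ t else ψ t, if_pos hab, hγ.ite_Icc hψ hjoin, fun t ht => ?_⟩
  by_cases htb : t ≤ b
  · simpa [htb] using hγU ⟨ht.1, htb⟩
  · simpa [htb] using hψU ⟨(not_le.1 htb).le, ht.2⟩

end IsometryOn

namespace IsLocalIsometry

variable {U : X → Y}

theorem continuous (hU : IsLocalIsometry U) : Continuous U :=
  continuous_iff_continuousAt.2 fun x =>
    let ⟨_, hVo, hxV, hVi, _⟩ := hU x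
    hVi.lipschitzOnWith.continuousOn.continuousAt (hVo.mem_nhds hxV)

theorem isLocallyInjective (hU : IsLocalIsometry U) : IsLocallyInjective U := fun x =>
  let ⟨V, hVo, hxV, hVi, _⟩ := hU x
  ⟨V, hVo, hxV, hVi.injOn⟩

theorem exists_isometryOn_ball_of_isCompact (hU : IsLocalIsometry U) {s : Set X}
    (hs : IsCompact s) : ∃ ε > 0, ∀ q ∈ s, IsometryOn U (ball q ε) := by
  choose V hVo hxV hVi _ using hU
  obtain ⟨ε, hε, hball⟩ :=
    lebesgue_number_lemma_of_metric hs hVo fun q _ => mem_iUnion.2 ⟨q, hxV q⟩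
  refine ⟨ε, hε, fun q hq u hu v hv => ?_⟩
  obtain ⟨p, hp⟩ := hball q hq
  exact hVi p u (hp hu) v (hp hv)

theorem exists_tendsto_lift_apply_self [CompleteSpace X] (hU : IsLocalIsometry U)
    {σ : ℝ → Y} (hσ : Continuous σ) {K : ℝ≥0} {x : X} {S : Set ℝ} (hS : S ⊆ Ici 0)
    {γ : ℝ → ℝ → X} (hγ0 : ∀ s ∈ S, γ s 0 = x) (hγ : ∀ s ∈ S, LipschitzOnWith K (γ s) (Icc 0 s))
    (hγU : ∀ s ∈ S, EqOn (U ∘ γ s) σ (Icc 0 s)) {s₀ : ℝ} (hs₀ : s₀ ∈ closure S) :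
    ∃ z, U z = σ s₀ ∧ Tendsto (fun s => γ s s) (𝓝[S] s₀) (𝓝 z) := by
  have hcompat : ∀ s ∈ S, ∀ s' ∈ S, s ≤ s' → γ s' s = γ s s := fun s hs s' hs' hss' =>
    (T2Space.isSeparatedMap U).eqOn_of_comp_eqOn hU.isLocallyInjective isPreconnected_Icc
      ((hγ s' hs').mono (Icc_subset_Icc_right hss')).continuousOn (hγ s hs).continuousOn
      (fun t ht => (hγU s' hs' (Icc_subset_Icc_right hss' ht)).trans (hγU s hs ht).symm)
      (left_mem_Icc.2 (hS hs)) ((hγ0 s' hs').trans (hγ0 s hs).symm) (right_mem_Icc.2 (hS hs))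
  have hdiag : LipschitzOnWith K (fun s => γ s s) S :=
    .of_dist_le_mul_of_le fun s hs s' hs' hss' => by
      have := (hγ s' hs').dist_le_mul s ⟨hS hs, hss'⟩ s' ⟨hS hs', le_rfl⟩
      rwa [hcompat s hs s' hs' hss', Real.dist_eq, abs_of_nonpos (sub_nonpos.2 hss'),
        neg_sub] at this
  have : (𝓝[S] s₀).NeBot := mem_closure_iff_nhdsWithin_neBot.1 hs₀
  obtain ⟨z, hz⟩ : ∃ z, Tendsto (fun s => γ s s) (𝓝[S] s₀) (𝓝 z) :=
    cauchy_map_iff_exists_tendsto.1 <|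
      (cauchy_nhds.mono' this nhdsWithin_le_nhds).map_of_le hdiag.uniformContinuousOn inf_le_right
  refine ⟨z, tendsto_nhds_unique ((hU.continuous.tendsto z).comp hz)
    ((hσ.tendsto s₀).mono_left nhdsWithin_le_nhds |>.congr' ?_), hz⟩
  filter_upwards [eventually_mem_nhdsWithin] with s hs using
    (hγU s hs ⟨hS hs, le_rfl⟩).symm

theorem exists_lift [CompleteSpace X] (hU : IsLocalIsometry U) {σ : ℝ → Y} {K : ℝ≥0}
    (hσ : LipschitzWith K σ) {x : X} (hx : U x = σ 0) :
    ∃ γ : ℝ → X, γ 0 = x ∧ LipschitzOnWith K γ (Icc 0 1) ∧ EqOn (U ∘ γ) σ (Icc 0 1) := by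
  set S := {s ∈ Icc (0 : ℝ) 1 |
    ∃ γ : ℝ → X, γ 0 = x ∧ LipschitzOnWith K γ (Icc 0 s) ∧ EqOn (U ∘ γ) σ (Icc 0 s)}
  have h0S : (0 : ℝ) ∈ S := ⟨left_mem_Icc.2 zero_le_one, fun _ => x, rfl,
    (LipschitzWith.const x).lipschitzOnWith.weaken zero_le, by simp [hx]⟩
  have hSbdd : BddAbove S := ⟨1, fun s hs => hs.1.2⟩
  have : Nonempty X := ⟨x⟩
  choose! γ hγ0 hγ hγU using fun s (hs : s ∈ S) => hs.2
  set s₀ := sSup S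
  have hs₀ : s₀ ∈ closure S := csSup_mem_closure ⟨0, h0S⟩ hSbdd
  obtain ⟨z, hUz, hz⟩ :=
    hU.exists_tendsto_lift_apply_self hσ.continuous (fun s hs => hs.1.1) hγ0 hγ hγU hs₀
  -- a local inverse of `U` near `z` continues the lifts past `s₀`
  obtain ⟨V, hVo, hzV, hVi, hUV⟩ := hU z
  obtain ⟨δ, hδ, hσδ⟩ : ∃ δ > 0, ∀ t, dist t s₀ < δ → σ t ∈ U '' V :=
    Metric.eventually_nhds_iff.1 <| hσ.continuous.continuousAt.preimage_mem_nhds <|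
      hUV.mem_nhds ⟨z, hzV, hUz⟩
  have : (𝓝[S] s₀).NeBot := mem_closure_iff_nhdsWithin_neBot.1 hs₀
  obtain ⟨s₁, hs₁S, hs₁δ, hs₁V⟩ : ∃ s₁ ∈ S, s₀ - δ < s₁ ∧ γ s₁ s₁ ∈ V :=
    (eventually_mem_nhdsWithin.and <|
      (eventually_nhdsWithin_of_eventually_nhds (eventually_gt_nhds (sub_lt_self s₀ hδ))).and
        (hz.eventually (hVo.mem_nhds hzV))).exists
  set c := min 1 (s₀ + δ / 2)
  have hs₁s₀ : s₁ ≤ s₀ := le_csSup hSbdd hs₁S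
  have hs₁c : s₁ ≤ c := le_min hs₁S.1.2 (by linarith)
  obtain ⟨γ', hγ'0, hγ', hγ'U⟩ := hVi.exists_extend_lift hs₁S.1.1 hs₁c (hγ s₁ hs₁S)
    (hγU s₁ hs₁S) hs₁V hσ.lipschitzOnWith fun t ht => hσδ t <| by
      rw [Real.dist_eq, abs_lt]
      constructor <;> linarith [ht.1, ht.2, min_le_right 1 (s₀ + δ / 2)]
  have hcS : c ∈ S :=
    ⟨⟨hs₁S.1.1.trans hs₁c, min_le_left _ _⟩, γ', hγ'0.trans (hγ0 s₁ hs₁S), hγ', hγ'U⟩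
  have hc : c = 1 := min_eq_left <| by
    rcases min_le_iff.1 (le_csSup hSbdd hcS) with h | h <;> linarith
  exact (hc ▸ hcS).2

end IsLocalIsometry

end MetricTarget

theorem dist_lineMap_lineMap_same_right {E : Type*} [NormedAddCommGroup E] [NormedSpace ℝ E]
    (p p' q : E) (t : ℝ) : dist (lineMap p q t) (lineMap p' q t) = |1 - t| * dist p p' := by
  rw [lineMap_apply_module, lineMap_apply_module, dist_add_right, dist_smul₀, Real.norm_eq_abs]

section NormedTarget

variable {X Y : Type*} [MetricSpace X] [NormedAddCommGroup Y] [NormedSpace ℝ Y] {U : X → Y}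

namespace IsLocalIsometry

theorem eventually_lift_apply_one_eq (hU : IsLocalIsometry U) {x : X} {y : Y} {γ : ℝ → X}
    (hγ : ContinuousOn γ (Icc 0 1)) (hγ0 : γ 0 = x)
    (hγU : EqOn (U ∘ γ) (lineMap (U x) y) (Icc 0 1)) :
    ∀ᶠ x' in 𝓝 x, ∀ γ' : ℝ → X, ContinuousOn γ' (Icc 0 1) → γ' 0 = x' →
      EqOn (U ∘ γ') (lineMap (U x') y) (Icc 0 1) → γ' 1 = γ 1 := by
  obtain ⟨ε, hε, hiso⟩ :=
    hU.exists_isometryOn_ball_of_isCompact (isCompact_Icc.image_of_continuousOn hγ)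
  have hball : ∀ t ∈ Icc (0 : ℝ) 1, IsometryOn U (ball (γ t) ε) := fun t ht =>
    hiso _ (mem_image_of_mem γ ht)
  have hx : IsometryOn U (ball x ε) := hγ0 ▸ hball 0 (left_mem_Icc.2 zero_le_one)
  filter_upwards [ball_mem_nhds x hε] with x' hx' γ' hγ' hγ'0 hγ'U
  have hclose : ∀ t ∈ Icc (0 : ℝ) 1, dist (γ' t) (γ t) < ε →
      dist (γ' t) (γ t) = (1 - t) * dist x' x := fun t ht hlt =>
    calc dist (γ' t) (γ t) = dist (U (γ' t)) (U (γ t)) :=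
          (hball t ht _ hlt _ (mem_ball_self hε)).symm
      _ = dist (lineMap (U x') y t) (lineMap (U x) y t) := by
          rw [← comp_apply (f := U), hγ'U ht, ← comp_apply (f := U), hγU ht]
      _ = (1 - t) * dist x' x := by
          rw [dist_lineMap_lineMap_same_right, abs_of_nonneg (sub_nonneg.2 ht.2),
            hx x' hx' x (mem_ball_self hε)]
  set f : Icc (0 : ℝ) 1 → ℝ := fun t => dist (γ' t) (γ t)
  have hf : Continuous f := hγ'.domRestrict.dist hγ.domRestrict
  -- being `ε`-close to `γ` forces `γ'` to be `dist x' x`-close, so this set is clopen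
  have hA : IsClopen {t | f t < ε} := by
    refine ⟨?_, isOpen_lt hf continuous_const⟩
    convert isClosed_le hf (continuous_const (y := dist x' x)) using 1
    ext t
    refine ⟨fun h => ?_, fun (h : f t ≤ dist x' x) => h.trans_lt hx'⟩
    change dist (γ' t) (γ t) ≤ dist x' x
    rw [hclose t t.2 h]
    exact mul_le_of_le_one_left dist_nonneg (by linarith [t.2.1])
  have h1 : (⟨1, right_mem_Icc.2 zero_le_one⟩ : Icc (0 : ℝ) 1) ∈ {t | f t < ε} :=
    hA.eq_univ ⟨⟨0, left_mem_Icc.2 zero_le_one⟩, by simpa [f, hγ'0, hγ0] using hx'⟩ ▸ mem_univ _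
  simpa using hclose 1 (right_mem_Icc.2 zero_le_one) h1

variable [CompleteSpace X]

theorem exists_lift_lineMap (hU : IsLocalIsometry U) (x : X) (y : Y) :
    ∃ γ : ℝ → X, γ 0 = x ∧ LipschitzOnWith (nndist (U x) y) γ (Icc 0 1) ∧
      EqOn (U ∘ γ) (lineMap (U x) y) (Icc 0 1) :=
  hU.exists_lift (lipschitzWith_lineMap _ _) (lineMap_apply_zero _ _).symm

theorem exists_dist_le (hU : IsLocalIsometry U) (x : X) (y : Y) :
    ∃ z, U z = y ∧ dist z x ≤ dist (U x) y := by
  obtain ⟨γ, hγ0, hγ, hγU⟩ := hU.exists_lift_lineMap x y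
  refine ⟨γ 1, by simpa using hγU (right_mem_Icc.2 zero_le_one), ?_⟩
  simpa [hγ0] using hγ.dist_le_mul 1 (right_mem_Icc.2 zero_le_one) 0 (left_mem_Icc.2 zero_le_one)

theorem injective [PreconnectedSpace X] (hU : IsLocalIsometry U) : Injective U := by
  intro a b hab
  choose Γ hΓ0 hΓ hΓU using fun x => hU.exists_lift_lineMap x (U a)
  have hconst : IsLocallyConstant fun x => Γ x 1 :=
    (IsLocallyConstant.iff_eventually_eq _).2 fun x =>
      (hU.eventually_lift_apply_one_eq (hΓ x).continuousOn (hΓ0 x) (hΓU x)).mono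
        fun x' h => h _ (hΓ x').continuousOn (hΓ0 x') (hΓU x')
  have hfix : ∀ c, U c = U a → Γ c 1 = c := fun c hc =>
    (hU.eventually_lift_apply_one_eq continuousOn_const rfl fun t _ => by simp [hc]).self_of_nhds
      _ (hΓ c).continuousOn (hΓ0 c) (hΓU c)
  calc a = Γ a 1 := (hfix a rfl).symm
    _ = Γ b 1 := hconst.apply_eq_of_preconnectedSpace _ _
    _ = b := hfix b hab.symm

theorem antilipschitzWith [PreconnectedSpace X] (hU : IsLocalIsometry U) :
    AntilipschitzWith 1 U :=
  .of_le_mul_dist fun u v => by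
    obtain ⟨z, hz, hzv⟩ := hU.exists_dist_le v (U u)
    rw [hU.injective hz, dist_comm (U v)] at hzv
    simpa using hzv

end IsLocalIsometry

end NormedTarget

theorem local_isometry_is_homeomorphism_general
    {X Y : Type*} [NormedAddCommGroup X] [NormedSpace ℝ X] [CompleteSpace X]
    [NormedAddCommGroup Y] [NormedSpace ℝ Y]
    (U : X → Y)
    (hloc : ∀ x : X, ∃ V : Set X, IsOpen V ∧ x ∈ V ∧
      (∀ u ∈ V, ∀ v ∈ V, ‖U u - U v‖ = ‖u - v‖) ∧ IsOpen (U '' V)) :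
    Function.Bijective U ∧ Continuous U ∧
      ∃ Uinv : Y → X, Function.LeftInverse Uinv U ∧ Function.RightInverse Uinv U ∧
        Continuous Uinv := by
  have hU : IsLocalIsometry U := fun x => by simpa only [IsometryOn, dist_eq_norm] using hloc x
  have hsurj : Surjective U := fun y => (hU.exists_dist_le 0 y).imp fun _ h => h.1
  have hbij : Bijective U := ⟨hU.antilipschitzWith.injective, hsurj⟩
  exact ⟨hbij, hU.continuous, surjInv hsurj, leftInverse_surjInv hbij, rightInverse_surjInv hsurj,
    (hU.antilipschitzWith.to_rightInverse (rightInverse_surjInv hsurj)).continuous⟩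

/-- A local isometry between real Banach spaces is a homeomorphism. -/
theorem local_isometry_is_homeomorphism
    {X Y : Type*} [NormedAddCommGroup X] [NormedSpace ℝ X] [CompleteSpace X]
    [NormedAddCommGroup Y] [NormedSpace ℝ Y] [CompleteSpace Y]
    (U : X → Y)
    (hloc : ∀ x : X, ∃ V : Set X, IsOpen V ∧ x ∈ V ∧
      (∀ u ∈ V, ∀ v ∈ V, ‖U u - U v‖ = ‖u - v‖) ∧ IsOpen (U '' V)) :
    Function.Bijective U ∧ Continuous U ∧
      ∃ Uinv : Y → X, Function.LeftInverse Uinv U ∧ Function.RightInverse Uinv U ∧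
        Continuous Uinv :=
  local_isometry_is_homeomorphism_general U hloc
end

section
/- Let X and Y be real Banach spaces and let U : X → Y be a local isometry, i.e. every x ∈ X has an open neighborhood V such that U restricted to V is a distance-preserving map onto an open subset of Y. Then U is locally affine: for every x₀ ∈ X there exists ε > 0 such that U((1−t)x₁ + t x₂) = (1−t)U(x₁) + t U(x₂) for all x₁, x₂ in the closed ball B(x₀, ε) and all t ∈ [0,1]. -/
/-!
Near `x₀`, `U` maps a ball `B(x₀, r)` isometrically onto `B(U x₀, r)`: the image is open, and it
is relatively closed in `B(U x₀, r)` because `X` is complete, so it is everything by connectedness.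
With inverses and point reflections `σ_p` available on balls, the Mazur–Ulam argument runs locally.
For `u, v` near `x₀` with midpoints `m` and `m'` of `u, v` and of `U u, U v`, the map
`g = σ_m ∘ U⁻¹ ∘ σ_m' ∘ U` fixes `u` and `v` and moves `m` by `2‖U m - m'‖`. Replacing `g` by
`σ_m ∘ g⁻¹ ∘ σ_m ∘ g` doubles the displacement of `m` at the price of shrinking the ball, while any
such map fixing `u` moves `m` by at most `2‖u - m‖`; so the displacement is `0` and `U` preserves
midpoints near `x₀`. Being continuous, `U` is then affine on segments there.
-/

open Metric Set Function
open AffineMap (lineMap)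

structure IsBallIsometry {X Y : Type*} [PseudoMetricSpace X] [PseudoMetricSpace Y]
    (f : X → Y) (c : X) (r : ℝ) : Prop where
  dist_eq : ∀ a ∈ ball c r, ∀ b ∈ ball c r, dist (f a) (f b) = dist a b
  image_eq : f '' ball c r = ball (f c) r

namespace IsBallIsometry

section Metric

variable {X Y Z : Type*} [MetricSpace X] [MetricSpace Y] [MetricSpace Z]
  {f : X → Y} {c : X} {r : ℝ}

theorem mapsTo (h : IsBallIsometry f c r) : MapsTo f (ball c r) (ball (f c) r) :=
  h.image_eq ▸ mapsTo_image f _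

theorem mono (h : IsBallIsometry f c r) {c' : X} {r' : ℝ} (hle : dist c' c + r' ≤ r) :
    IsBallIsometry f c' r' := by
  have hsub : ball c' r' ⊆ ball c r := ball_subset_ball' (by linarith [dist_comm c' c])
  have hdist : ∀ a ∈ ball c' r', ∀ b ∈ ball c' r', dist (f a) (f b) = dist a b :=
    fun a ha b hb => h.dist_eq a (hsub ha) b (hsub hb)
  refine ⟨hdist, Subset.antisymm ?_ fun y hy => ?_⟩
  · rintro _ ⟨x, hx, rfl⟩
    rw [mem_ball, hdist x hx c' (mem_ball_self (pos_of_mem_ball hx))]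
    exact hx
  · have hr' : 0 < r' := pos_of_mem_ball hy
    have hc' : c' ∈ ball c r := mem_ball.2 (by linarith)
    have hfc' : dist (f c') (f c) = dist c' c :=
      h.dist_eq c' hc' c (mem_ball_self (pos_of_mem_ball hc'))
    obtain ⟨x, hx, rfl⟩ : y ∈ f '' ball c r := h.image_eq ▸ mem_ball.2 (by
      linarith [dist_triangle y (f c') (f c), mem_ball.1 hy])
    exact ⟨x, by rwa [mem_ball, ← h.dist_eq x hx c' hc'], rfl⟩

theorem comp {g : Y → Z} (hg : IsBallIsometry g (f c) r) (hf : IsBallIsometry f c r) :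
    IsBallIsometry (g ∘ f) c r where
  dist_eq a ha b hb := by
    rw [comp_apply, comp_apply, hg.dist_eq _ (hf.mapsTo ha) _ (hf.mapsTo hb), hf.dist_eq a ha b hb]
  image_eq := by rw [image_comp, hf.image_eq, hg.image_eq, comp_apply]

theorem exists_leftInvOn (h : IsBallIsometry f c r) (hr : 0 < r) :
    ∃ g : Y → X, IsBallIsometry g (f c) r ∧ LeftInvOn g f (ball c r) := by
  have : Nonempty X := ⟨c⟩
  have hinj : InjOn f (ball c r) := fun a ha b hb hab =>
    dist_eq_zero.1 (by rw [← h.dist_eq a ha b hb, hab, dist_self])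
  have hleft : LeftInvOn (invFunOn f (ball c r)) f (ball c r) := fun x hx =>
    hinj.leftInvOn_invFunOn hx
  have hsurj : SurjOn f (ball c r) (ball (f c) r) := h.image_eq.symm.subset
  refine ⟨invFunOn f (ball c r), ⟨fun a ha b hb => ?_, ?_⟩, hleft⟩
  · rw [← h.dist_eq _ (hsurj.mapsTo_invFunOn ha) _ (hsurj.mapsTo_invFunOn hb),
      hsurj.rightInvOn_invFunOn ha, hsurj.rightInvOn_invFunOn hb]
  · rw [hleft (mem_ball_self hr), ← h.image_eq, hleft.image_image]

theorem continuousOn (hf : IsBallIsometry f c r) : ContinuousOn f (ball c r) :=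
  (LipschitzOnWith.of_dist_le' (K := 1) fun a ha b hb => by
    rw [hf.dist_eq a ha b hb, one_mul]).continuousOn

theorem dist_apply_le_of_apply_eq {g : X → X} {m u : X} {s : ℝ} (hg : IsBallIsometry g m s)
    (hu : u ∈ ball m s) (hgu : g u = u) : dist (g m) m ≤ 2 * dist u m :=
  calc dist (g m) m ≤ dist (g m) (g u) + dist u m := by rw [hgu]; exact dist_triangle _ _ _
    _ = 2 * dist u m := by
      rw [hg.dist_eq m (mem_ball_self (pos_of_mem_ball hu)) u hu, dist_comm m u]; ring

end Metric

end IsBallIsometry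

theorem IsometryEquiv.isBallIsometry {X Y : Type*} [PseudoMetricSpace X] [PseudoMetricSpace Y]
    (e : X ≃ᵢ Y) (c : X) (r : ℝ) : IsBallIsometry e c r :=
  ⟨fun a _ b _ => e.dist_eq a b, e.image_ball c r⟩

theorem isBallIsometry_of_isOpen_image {X Y : Type*} [MetricSpace X] [CompleteSpace X]
    [NormedAddCommGroup Y] [NormedSpace ℝ Y] {f : X → Y} {V : Set X}
    (hV : ∀ a ∈ V, ∀ b ∈ V, dist (f a) (f b) = dist a b) (hopen : IsOpen (f '' V))
    {c : X} {r : ℝ} (hr : 0 < r) (hball : ball c r ⊆ V) : IsBallIsometry f c r := by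
  have hc : c ∈ V := hball (mem_ball_self hr)
  have hdist : ∀ x ∈ V, dist (f x) (f c) = dist x c := fun x hx => hV x hx c hc
  refine ⟨fun a ha b hb => hV a (hball ha) b (hball hb), Subset.antisymm ?_ fun y hy => ?_⟩
  · rintro _ ⟨x, hx, rfl⟩
    rw [mem_ball, hdist x (hball hx)]
    exact hx
  suffices hsub : ball (f c) r ⊆ f '' V by
    obtain ⟨x, hx, rfl⟩ := hsub hy
    exact ⟨x, by rwa [mem_ball, ← hdist x hx], rfl⟩
  refine isPreconnected_ball.subset_of_closure_inter_subset hopen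
    ⟨f c, mem_ball_self hr, c, hc, rfl⟩ ?_
  rintro y ⟨hy_cl, hy⟩
  obtain ⟨ys, hys, hlim⟩ := mem_closure_iff_seq_limit.1 hy_cl
  choose xs hxs hfxs using hys
  have hcauchy : CauchySeq xs := by
    refine Metric.cauchySeq_iff.2 fun ε hε => ?_
    obtain ⟨N, hN⟩ := Metric.cauchySeq_iff.1 hlim.cauchySeq ε hε
    refine ⟨N, fun m hm n hn => ?_⟩
    rw [← hV _ (hxs m) _ (hxs n), hfxs, hfxs]
    exact hN m hm n hn
  obtain ⟨x, hx⟩ := cauchySeq_tendsto_of_complete hcauchy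
  have hxc : dist x c = dist y (f c) := tendsto_nhds_unique (hx.dist tendsto_const_nhds) <| by
    simpa only [← hfxs, hdist _ (hxs _)] using hlim.dist (tendsto_const_nhds (x := f c))
  have hxV : x ∈ V := hball (by rwa [mem_ball, hxc])
  refine ⟨x, hxV, tendsto_nhds_unique ?_ hlim⟩
  rw [tendsto_iff_dist_tendsto_zero] at hx ⊢
  simpa only [← hfxs, hV _ (hxs _) x hxV] using hx

section Normed

variable {X Y : Type*} [NormedAddCommGroup X] [NormedSpace ℝ X]
  [NormedAddCommGroup Y] [NormedSpace ℝ Y]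

open AffineIsometryEquiv

theorem isBallIsometry_pointReflection (m c : X) (r : ℝ) :
    IsBallIsometry (pointReflection ℝ m) c r :=
  (pointReflection ℝ m).toIsometryEquiv.isBallIsometry c r

namespace IsBallIsometry

variable {g : X → X} {u v m : X} {s : ℝ}

theorem exists_dist_apply_eq_two_mul (hg : IsBallIsometry g m s) (hm : midpoint ℝ u v = m)
    (hgu : g u = u) (hgv : g v = v) (hu : dist u m < s - 2 * dist (g m) m) :
    ∃ g' : X → X, IsBallIsometry g' m (s - 2 * dist (g m) m) ∧ g' u = u ∧ g' v = v ∧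
      dist (g' m) m = 2 * dist (g m) m := by
  subst hm
  set m := midpoint ℝ u v
  set δ := dist (g m) m
  have hδ : 0 ≤ δ := dist_nonneg
  have hum : 0 ≤ dist u m := dist_nonneg
  have hvm : dist v m = dist u m := (dist_left_midpoint_eq_dist_right_midpoint u v).symm
  have hs : 0 < s := by linarith
  obtain ⟨ginv, hginv, hleft⟩ := hg.exists_leftInvOn hs
  set σ := pointReflection ℝ m
  have hσu : σ u = v := pointReflection_midpoint_left u v
  have hσv : σ v = u := pointReflection_midpoint_right u v
  have hσgm : dist (σ (g m)) (g m) = 2 * δ := by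
    rw [dist_pointReflection_self_real, dist_comm]
  have hginv_u : ginv u = u := by
    simpa only [hgu] using hleft (mem_ball.2 (by linarith) : u ∈ ball m s)
  have hginv_v : ginv v = v := by
    simpa only [hgv] using hleft (mem_ball.2 (by linarith) : v ∈ ball m s)
  have hσg : IsBallIsometry (σ ∘ g) m (s - 2 * δ) :=
    (isBallIsometry_pointReflection _ _ _).comp (hg.mono (by rw [dist_self]; linarith))
  have hginv' : IsBallIsometry ginv ((σ ∘ g) m) (s - 2 * δ) :=
    hginv.mono (by rw [comp_apply, hσgm]; linarith)
  refine ⟨σ ∘ ginv ∘ σ ∘ g, (isBallIsometry_pointReflection _ _ _).comp (hginv'.comp hσg),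
    ?_, ?_, ?_⟩
  · simp only [comp_apply, hgu, hσu, hginv_v, hσv]
  · simp only [comp_apply, hgv, hσv, hginv_u, hσu]
  · have hσgm_mem : σ (g m) ∈ ball (g m) s := by rw [mem_ball, hσgm]; linarith
    calc dist (σ (ginv (σ (g m)))) m = dist (ginv (σ (g m))) (ginv (g m)) := by
          rw [dist_pointReflection_fixed, hleft (mem_ball_self hs)]
      _ = 2 * δ := by rw [hginv.dist_eq _ hσgm_mem _ (mem_ball_self hs), hσgm]

/-- The radii `s + 2δ - 2 ^ (n + 1) δ` stay above `dist u m` because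
each displacement is at most `2 * dist u m`. -/
theorem exists_dist_apply_eq_two_pow_mul (hg : IsBallIsometry g m s) (hm : midpoint ℝ u v = m)
    (hgu : g u = u) (hgv : g v = v) (hs : 9 * dist u m < s) (n : ℕ) :
    ∃ g' : X → X,
      IsBallIsometry g' m (s + 2 * dist (g m) m - 2 ^ (n + 1) * dist (g m) m) ∧
      g' u = u ∧ g' v = v ∧ dist (g' m) m = 2 ^ n * dist (g m) m ∧
      dist u m < s + 2 * dist (g m) m - 2 ^ (n + 1) * dist (g m) m := by
  set δ := dist (g m) m
  have hδ : 0 ≤ δ := dist_nonneg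
  have hum : 0 ≤ dist u m := dist_nonneg
  induction n with
  | zero =>
    have hR : s + 2 * δ - 2 ^ (0 + 1) * δ = s := by ring
    exact ⟨g, by rwa [hR], hgu, hgv, by rw [pow_zero, one_mul], by rw [hR]; linarith⟩
  | succ n ih =>
    obtain ⟨g', hg', hg'u, hg'v, hg'm, hR⟩ := ih
    have hbound := hg'.dist_apply_le_of_apply_eq (mem_ball.2 hR) hg'u
    have hpow : (2 : ℝ) ^ (n + 1 + 1) = 2 * 2 * 2 ^ n := by ring
    have hR' : s + 2 * δ - 2 ^ (n + 1) * δ - 2 * dist (g' m) m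
        = s + 2 * δ - 2 ^ (n + 1 + 1) * δ := by rw [hg'm]; ring
    obtain ⟨g'', hg'', hg''u, hg''v, hg''m⟩ := hg'.exists_dist_apply_eq_two_mul hm hg'u hg'v
      (by rw [hR', hpow]; nlinarith)
    refine ⟨g'', hR' ▸ hg'', hg''u, hg''v, by rw [hg''m, hg'm]; ring, ?_⟩
    rw [hpow]; nlinarith

theorem midpoint_fixed (hg : IsBallIsometry g m s) (hm : midpoint ℝ u v = m)
    (hgu : g u = u) (hgv : g v = v) (hs : 9 * dist u m < s) : g m = m := by
  have hbound : ∀ n : ℕ, 2 ^ n * dist (g m) m ≤ 2 * dist u m := fun n => by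
    obtain ⟨g', hg', hg'u, -, hg'm, hR⟩ := hg.exists_dist_apply_eq_two_pow_mul hm hgu hgv hs n
    exact hg'm ▸ hg'.dist_apply_le_of_apply_eq (mem_ball.2 hR) hg'u
  by_contra hne
  have hpos : 0 < dist (g m) m := dist_pos.2 hne
  obtain ⟨n, hn⟩ := pow_unbounded_of_one_lt (2 * dist u m / dist (g m) m) one_lt_two
  rw [div_lt_iff₀ hpos] at hn
  linarith [hbound n]

end IsBallIsometry

/-- A maximum point `t₀` of `‖F t - lineMap (F 0) (F 1) t‖` is the midpoint of an endpoint, where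
this difference vanishes, and another point of `[0, 1]`, so the maximum is at most half itself. -/
theorem eq_lineMap_of_map_midpoint {Y : Type*} [NormedAddCommGroup Y] [NormedSpace ℝ Y]
    {F : ℝ → Y} (hc : ContinuousOn F (Icc 0 1))
    (hmid : ∀ s ∈ Icc (0 : ℝ) 1, ∀ t ∈ Icc (0 : ℝ) 1,
      F (midpoint ℝ s t) = midpoint ℝ (F s) (F t))
    {t : ℝ} (ht : t ∈ Icc (0 : ℝ) 1) : F t = lineMap (F 0) (F 1) t := by
  set G : ℝ → Y := fun t => F t - lineMap (F 0) (F 1) t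
  have hGmid : ∀ s ∈ Icc (0 : ℝ) 1, ∀ t ∈ Icc (0 : ℝ) 1,
      G (midpoint ℝ s t) = midpoint ℝ (G s) (G t) := fun s hs t ht => by
    simp only [G, hmid s hs t ht, AffineMap.map_midpoint, ← vsub_eq_sub, midpoint_vsub_midpoint]
  have hG0 : G 0 = 0 := by simp [G]
  have hG1 : G 1 = 0 := by simp [G]
  have hGc : ContinuousOn G (Icc 0 1) := hc.sub (by fun_prop)
  obtain ⟨t₀, ht₀, hmax⟩ := isCompact_Icc.exists_isMaxOn (nonempty_Icc.2 zero_le_one) hGc.norm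
  rw [isMaxOn_iff] at hmax
  have hhalf : ∀ a ∈ Icc (0 : ℝ) 1, ∀ e ∈ Icc (0 : ℝ) 1, G e = 0 → midpoint ℝ a e = t₀ →
      ‖G t₀‖ = 0 := fun a ha e he hGe hae => by
    have : ‖G t₀‖ = 2⁻¹ * ‖G a‖ := by
      rw [← hae, hGmid a ha e he, hGe, ← dist_zero_right, dist_midpoint_right (𝕜 := ℝ),
        Real.norm_two, dist_zero_right]
    linarith [norm_nonneg (G t₀), hmax a ha]
  have hzero : ‖G t₀‖ = 0 := by
    rcases le_total t₀ 2⁻¹ with h | h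
    · exact hhalf (2 * t₀) ⟨by linarith [ht₀.1], by linarith⟩ 0 (left_mem_Icc.2 zero_le_one)
        hG0 (by rw [midpoint_eq_smul_add]; simp)
    · exact hhalf (2 * t₀ - 1) ⟨by linarith, by linarith [ht₀.2]⟩ 1
        (right_mem_Icc.2 zero_le_one) hG1 (by rw [midpoint_eq_smul_add]; simp)
  have hGt := hmax t ht
  rw [hzero, norm_le_zero_iff] at hGt
  exact sub_eq_zero.1 hGt

namespace IsBallIsometry

variable {f : X → Y} {c : X} {r ε : ℝ}

theorem map_midpoint (hf : IsBallIsometry f c r) (hε : 11 * ε < r) {u v : X}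
    (hu : u ∈ closedBall c ε) (hv : v ∈ closedBall c ε) :
    f (midpoint ℝ u v) = midpoint ℝ (f u) (f v) := by
  set m := midpoint ℝ u v
  set m' := midpoint ℝ (f u) (f v)
  have hε0 : 0 ≤ ε := nonempty_closedBall.1 ⟨u, hu⟩
  have hr : 0 < r := by linarith
  obtain ⟨finv, hfinv, hleft⟩ := hf.exists_leftInvOn hr
  have hmc : m ∈ closedBall c ε := (convex_closedBall c ε).midpoint_mem hu hv
  have hum : dist u m ≤ ε := by
    rw [dist_left_midpoint (𝕜 := ℝ), Real.norm_two]
    linarith [dist_triangle_right u v c, mem_closedBall.1 hu, mem_closedBall.1 hv]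
  have hvm : dist v m ≤ ε := (dist_left_midpoint_eq_dist_right_midpoint (𝕜 := ℝ) u v) ▸ hum
  have hsub : closedBall c ε ⊆ ball c r := closedBall_subset_ball (by linarith)
  set σ := pointReflection ℝ m
  set τ := pointReflection ℝ m'
  have hτfm : dist (τ (f m)) (f c) ≤ 2 * ε :=
    calc dist (τ (f m)) (f c) ≤ dist (τ (f m)) (τ (f v)) + dist (τ (f v)) (f c) :=
          dist_triangle _ _ _
      _ = dist m v + dist u c := by
          rw [τ.dist_map, pointReflection_midpoint_right, hf.dist_eq _ (hsub hmc) _ (hsub hv),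
            hf.dist_eq _ (hsub hu) _ (hsub (mem_closedBall_self hε0))]
      _ ≤ 2 * ε := by linarith [dist_comm m v, mem_closedBall.1 hu]
  have hτf : IsBallIsometry (τ ∘ f) m (r - 2 * ε) :=
    (isBallIsometry_pointReflection _ _ _).comp
      (hf.mono (by linarith [mem_closedBall.1 hmc]))
  have hfinv' : IsBallIsometry finv ((τ ∘ f) m) (r - 2 * ε) :=
    hfinv.mono (by rw [comp_apply]; linarith)
  have hg : IsBallIsometry (σ ∘ finv ∘ τ ∘ f) m (r - 2 * ε) :=
    (isBallIsometry_pointReflection _ _ _).comp (hfinv'.comp hτf)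
  have hgu : (σ ∘ finv ∘ τ ∘ f) u = u := by
    simp only [comp_apply, τ, m', pointReflection_midpoint_left, hleft (hsub hv), σ, m,
      pointReflection_midpoint_right]
  have hgv : (σ ∘ finv ∘ τ ∘ f) v = v := by
    simp only [comp_apply, τ, m', pointReflection_midpoint_right, hleft (hsub hu), σ, m,
      pointReflection_midpoint_left]
  have hfix := hg.midpoint_fixed rfl hgu hgv (by linarith)
  have hfinv_m : finv (τ (f m)) = m :=
    σ.injective (by rw [show σ m = m from pointReflection_self m]; exact hfix)
  have hτfm_mem : τ (f m) ∈ ball (f c) r := mem_ball.2 (by linarith)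
  have hzero : dist (τ (f m)) (f m) = 0 := by
    rw [← hfinv.dist_eq _ hτfm_mem _ (hf.mapsTo (hsub hmc)), hfinv_m, hleft (hsub hmc),
      dist_self]
  rw [dist_pointReflection_self_real, mul_eq_zero, dist_eq_zero] at hzero
  exact (hzero.resolve_left two_ne_zero).symm

theorem map_lineMap (hf : IsBallIsometry f c r) (hε : 11 * ε < r) {x₁ x₂ : X}
    (h₁ : x₁ ∈ closedBall c ε) (h₂ : x₂ ∈ closedBall c ε) {t : ℝ} (ht : t ∈ Icc (0 : ℝ) 1) :
    f (lineMap x₁ x₂ t) = lineMap (f x₁) (f x₂) t := by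
  have hε0 : 0 ≤ ε := nonempty_closedBall.1 ⟨x₁, h₁⟩
  have hsub : closedBall c ε ⊆ ball c r := closedBall_subset_ball (by linarith)
  have hseg : MapsTo (lineMap x₁ x₂) (Icc (0 : ℝ) 1) (closedBall c ε) :=
    fun s hs => (convex_closedBall c ε).lineMap_mem h₁ h₂ hs
  simpa only [comp_apply, AffineMap.lineMap_apply_zero, AffineMap.lineMap_apply_one] using
    eq_lineMap_of_map_midpoint (F := f ∘ lineMap x₁ x₂)
    ((hf.continuousOn.mono hsub).comp AffineMap.lineMap_continuous.continuousOn hseg)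
    (fun s hs t ht => by
      simp only [comp_apply, AffineMap.map_midpoint]
      exact hf.map_midpoint hε (hseg hs) (hseg ht)) ht

end IsBallIsometry

end Normed

theorem local_isometry_is_locally_affine_general
    {X Y : Type*} [NormedAddCommGroup X] [NormedSpace ℝ X] [CompleteSpace X]
    [NormedAddCommGroup Y] [NormedSpace ℝ Y]
    (U : X → Y)
    (hloc : ∀ x : X, ∃ V : Set X, IsOpen V ∧ x ∈ V ∧
      (∀ u ∈ V, ∀ v ∈ V, ‖U u - U v‖ = ‖u - v‖) ∧ IsOpen (U '' V)) :
    ∀ x₀ : X, ∃ ε > (0 : ℝ),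
      ∀ x₁ ∈ Metric.closedBall x₀ ε, ∀ x₂ ∈ Metric.closedBall x₀ ε,
        ∀ t ∈ Set.Icc (0 : ℝ) 1,
          U ((1 - t) • x₁ + t • x₂) = (1 - t) • U x₁ + t • U x₂ := by
  intro x₀
  obtain ⟨V, hVopen, hx₀, hiso, hopen⟩ := hloc x₀
  obtain ⟨r, hr, hball⟩ := Metric.isOpen_iff.1 hVopen x₀ hx₀
  have hU : IsBallIsometry U x₀ r := isBallIsometry_of_isOpen_image
    (fun a ha b hb => by simpa only [dist_eq_norm] using hiso a ha b hb) hopen hr hball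
  refine ⟨r / 12, by positivity, fun x₁ h₁ x₂ h₂ t ht => ?_⟩
  simpa only [AffineMap.lineMap_apply_module] using hU.map_lineMap (by linarith) h₁ h₂ ht

/-- A local isometry between real Banach spaces is locally affine. -/
theorem local_isometry_is_locally_affine
    {X Y : Type*} [NormedAddCommGroup X] [NormedSpace ℝ X] [CompleteSpace X]
    [NormedAddCommGroup Y] [NormedSpace ℝ Y] [CompleteSpace Y]
    (U : X → Y)
    (hloc : ∀ x : X, ∃ V : Set X, IsOpen V ∧ x ∈ V ∧
      (∀ u ∈ V, ∀ v ∈ V, ‖U u - U v‖ = ‖u - v‖) ∧ IsOpen (U '' V)) :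
    ∀ x₀ : X, ∃ ε > (0 : ℝ),
      ∀ x₁ ∈ Metric.closedBall x₀ ε, ∀ x₂ ∈ Metric.closedBall x₀ ε,
        ∀ t ∈ Set.Icc (0 : ℝ) 1,
          U ((1 - t) • x₁ + t • x₂) = (1 - t) • U x₁ + t • U x₂ :=
  local_isometry_is_locally_affine_general U hloc
end

section
/- Let X and Y be real Banach spaces and let U : X → Y be a bijection which is locally isometric, i.e. every x ∈ X has an open neighborhood V such that U restricted to V is isometric. If U⁻¹ is continuous, then U is a local isometry: every x ∈ X has an open neighborhood V such that U restricted to V is a distance-preserving map onto an open subset of Y (indeed, for every x there exists δ > 0 with U(B(x, δ)) = B(U(x), δ)). -/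
/-!
If `U` is isometric on a neighbourhood `V` of `x`, it sends every closed ball `B(x, δ) ⊆ V` into
`B(U x, δ)`. Continuity of `U⁻¹` at `U x` lets us shrink `δ` until `U⁻¹` also maps `B(U x, δ)`
into `V`; as `U` is isometric there, `U⁻¹` then sends `B(U x, δ)` into `B(x, δ)`, whence
`U(B(x, δ)) = B(U x, δ)`. Openness of the images is just continuity of
`U⁻¹`, since `U '' V = U⁻¹ ⁻¹' V`.
-/

open Metric Set Filter Topology

universe u v

variable {α : Type u} {β : Type v} [PseudoMetricSpace α] [PseudoMetricSpace β]

theorem exists_pos_closedBall_subset_and_mapsTo_closedBall {g : β → α} {x : α} {y : β}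
    {V : Set α} (hV : V ∈ 𝓝 x) (hg : ContinuousAt g y) (hgy : g y = x) :
    ∃ δ > 0, closedBall x δ ⊆ V ∧ MapsTo g (closedBall y δ) V := by
  have hpre : g ⁻¹' V ∈ 𝓝 y := hg.preimage_mem_nhds (hgy ▸ hV)
  have hsmall : ∀ᶠ δ in 𝓝[>] (0 : ℝ), closedBall x δ ⊆ V ∧ closedBall y δ ⊆ g ⁻¹' V :=
    ((eventually_closedBall_subset hV).and (eventually_closedBall_subset hpre)).filter_mono
      nhdsWithin_le_nhds
  obtain ⟨δ, hδ, hpos⟩ := (hsmall.and self_mem_nhdsWithin).exists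
  exact ⟨δ, hpos, hδ⟩

theorem image_closedBall_eq_closedBall_of_isometricOn {f : α → β} {g : β → α}
    (hfg : Function.RightInverse g f) {V : Set α} {x : α} {δ : ℝ}
    (hiso : ∀ u ∈ V, ∀ v ∈ V, dist (f u) (f v) = dist u v) (hx : x ∈ V)
    (hball : closedBall x δ ⊆ V) (hmaps : MapsTo g (closedBall (f x) δ) V) :
    f '' closedBall x δ = closedBall (f x) δ := by
  apply Subset.antisymm
  · rintro _ ⟨u, hu, rfl⟩
    rw [mem_closedBall, hiso u (hball hu) x hx]
    exact hu
  · intro y hy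
    refine ⟨g y, ?_, hfg y⟩
    rw [mem_closedBall, ← hiso (g y) (hmaps hy) x hx, hfg y]
    exact hy

theorem locally_isometric_bijection_continuous_inverse_is_local_isometry_general
    {X Y : Type*} [NormedAddCommGroup X] [NormedAddCommGroup Y]
    (U : X → Y) (Uinv : Y → X)
    (hleft : Function.LeftInverse Uinv U) (hright : Function.RightInverse Uinv U)
    (hloc : ∀ x : X, ∃ V : Set X, IsOpen V ∧ x ∈ V ∧
      ∀ u ∈ V, ∀ v ∈ V, ‖U u - U v‖ = ‖u - v‖)
    (hcont : Continuous Uinv) :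
    (∀ x : X, ∃ V : Set X, IsOpen V ∧ x ∈ V ∧
      (∀ u ∈ V, ∀ v ∈ V, ‖U u - U v‖ = ‖u - v‖) ∧ IsOpen (U '' V)) ∧
    (∀ x : X, ∃ δ > (0 : ℝ),
      U '' Metric.closedBall x δ = Metric.closedBall (U x) δ) := by
  refine ⟨fun x ↦ ?_, fun x ↦ ?_⟩
  · obtain ⟨V, hV, hxV, hiso⟩ := hloc x
    refine ⟨V, hV, hxV, hiso, ?_⟩
    rw [image_eq_preimage_of_inverse hleft hright]
    exact hV.preimage hcont
  · obtain ⟨V, hV, hxV, hiso⟩ := hloc x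
    have hdist : ∀ u ∈ V, ∀ v ∈ V, dist (U u) (U v) = dist u v := by
      simpa only [dist_eq_norm] using hiso
    obtain ⟨δ, hδ, hball, hmaps⟩ :=
      exists_pos_closedBall_subset_and_mapsTo_closedBall (hV.mem_nhds hxV) hcont.continuousAt
        (hleft x)
    exact ⟨δ, hδ, image_closedBall_eq_closedBall_of_isometricOn hright hdist hxV hball hmaps⟩

/-- A locally isometric bijection between real Banach spaces with continuous inverse is
a local isometry; indeed, around every point `U` maps some closed ball onto the closed
ball of the same radius around the image point. -/
theorem locally_isometric_bijection_continuous_inverse_is_local_isometry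
    {X Y : Type*} [NormedAddCommGroup X] [NormedSpace ℝ X] [CompleteSpace X]
    [NormedAddCommGroup Y] [NormedSpace ℝ Y] [CompleteSpace Y]
    (U : X → Y) (Uinv : Y → X)
    (hleft : Function.LeftInverse Uinv U) (hright : Function.RightInverse Uinv U)
    (hloc : ∀ x : X, ∃ V : Set X, IsOpen V ∧ x ∈ V ∧
      ∀ u ∈ V, ∀ v ∈ V, ‖U u - U v‖ = ‖u - v‖)
    (hcont : Continuous Uinv) :
    (∀ x : X, ∃ V : Set X, IsOpen V ∧ x ∈ V ∧
      (∀ u ∈ V, ∀ v ∈ V, ‖U u - U v‖ = ‖u - v‖) ∧ IsOpen (U '' V)) ∧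
    (∀ x : X, ∃ δ > (0 : ℝ),
      U '' Metric.closedBall x δ = Metric.closedBall (U x) δ) :=
  locally_isometric_bijection_continuous_inverse_is_local_isometry_general U Uinv hleft hright hloc
    hcont
end

section
/- Let X and Y be real Banach spaces, let U : X → Y be a surjection such that for every x₀ ∈ X there exists ε(x₀) > 0 with U restricted to the closed ball B(x₀, ε(x₀)) isometric, and suppose there exists x₀ ∈ X such that the image U(B(x₀, ε(x₀))) has non-empty interior in Y. Then there exists a unique affine isometric map Ū : X → Y (i.e. Ū((1−t)x + t y) = (1−t)Ū(x) + t Ū(y) for all x, y ∈ X, t ∈ [0,1], and ‖Ū(x) − Ū(y)‖ = ‖x − y‖ for all x, y ∈ X) which agrees with U on B(x₀, ε(x₀)). -/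
/-!
Pick `y₁` interior to `U(B(x₀, ε x₀))` and a preimage `x₁`: near `x₁`, `U` maps a closed ball
isometrically onto the closed ball of the same radius about `y₁`. Väisälä's reflection argument
from the proof of the Mazur–Ulam theorem, run inside the lens of two points, shows that such a map
preserves midpoints, so `2ⁿ (U (x₁ + 2⁻ⁿ v) - y₁)` is eventually constant in `n` and defines a
surjective isometry `Φ : X → Y`, which is affine by the Mazur–Ulam theorem. The set of points near
which `U = Φ` is open, and it is closed by a rigidity lemma: a point of a normed space is
determined by its distances to the points of a ball of radius `τ` as soon as it lies within
`6τ/5` of the centre. Hence `U = Φ` everywhere, and `Φ` is unique because an affine map is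
determined by its values on a ball.
-/

open Set Metric Topology

section IsometricOn

variable {α β : Type*}

def IsometricOn [PseudoMetricSpace α] [PseudoMetricSpace β] (f : α → β) (s : Set α) : Prop :=
  ∀ a ∈ s, ∀ b ∈ s, dist (f a) (f b) = dist a b

variable [MetricSpace α] [MetricSpace β] {f : α → β} {s t : Set α}

theorem IsometricOn.mono (hf : IsometricOn f t) (hst : s ⊆ t) : IsometricOn f s :=
  fun a ha b hb => hf a (hst ha) b (hst hb)

theorem IsometricOn.injOn (hf : IsometricOn f s) : InjOn f s := fun a ha b hb hab =>
  dist_eq_zero.mp (by rw [← hf a ha b hb, hab, dist_self])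

theorem IsometricOn.surjOn_closedBall {A : Set α} {x : α} {r s : ℝ} (hf : IsometricOn f A)
    (hx : x ∈ A) (h : closedBall (f x) r ⊆ f '' A) (hs : s ≤ r) :
    SurjOn f (closedBall x s) (closedBall (f x) s) := by
  intro q hq
  obtain ⟨p, hp, rfl⟩ := h (closedBall_subset_closedBall hs hq)
  exact ⟨p, by rwa [mem_closedBall, ← hf p hp x hx], rfl⟩

noncomputable def IsometricOn.isometryEquiv {t : Set β} (hf : IsometricOn f s) (h : BijOn f s t) :
    s ≃ᵢ t where
  toEquiv := h.equiv f
  isometry_toFun := Isometry.of_dist_eq fun a b => hf a a.2 b b.2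

end IsometricOn

section Vaisala

variable {V P W Q : Type*} [NormedAddCommGroup V] [NormedSpace ℝ V] [MetricSpace P]
  [NormedAddTorsor V P] [NormedAddCommGroup W] [NormedSpace ℝ W] [MetricSpace Q]
  [NormedAddTorsor W Q]

open AffineIsometryEquiv

noncomputable def pointReflectionOn (z : P) {S : Set P} (hS : MapsTo (pointReflection ℝ z) S S) :
    S ≃ᵢ S :=
  IsometryEquiv.mk' (hS.restrict _ _ _) (hS.restrict _ _ _)
    (fun p => Subtype.ext (pointReflection_involutive (𝕜 := ℝ) z p))
    (Isometry.of_dist_eq fun a b => (pointReflection ℝ z).dist_map a b)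

theorem IsometryEquiv.center_fixed {S : Set P} {z : P} (hz : z ∈ S) (hS : Bornology.IsBounded S)
    (hsymm : MapsTo (pointReflection ℝ z) S S) (e : S ≃ᵢ S) : e ⟨z, hz⟩ = ⟨z, hz⟩ := by
  set z' : S := ⟨z, hz⟩
  set R := pointReflectionOn z hsymm
  have hR : ∀ p : S, dist (R p) z' = dist p z' := fun p =>
    dist_pointReflection_fixed (𝕜 := ℝ) z p
  -- Väisälä's trick: `R ∘ e⁻¹ ∘ R ∘ e` doubles the displacement of the centre, which can thus be
  -- made arbitrarily large, while it stays below `diam S`.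
  have hdouble : ∀ e : S ≃ᵢ S, dist ((((e.trans R).trans e.symm).trans R) z') z' =
      2 * dist (e z') z' := by
    intro e
    simp only [IsometryEquiv.trans_apply]
    rw [hR, ← e.dist_eq, e.apply_symm_apply, dist_comm (e z')]
    exact dist_pointReflection_self_real z (e z' : P)
  have hpow : ∀ n : ℕ, ∃ e' : S ≃ᵢ S, dist (e' z') z' = 2 ^ n * dist (e z') z' := by
    intro n
    induction n with
    | zero => exact ⟨e, by simp⟩
    | succ n ih =>
      obtain ⟨e', he'⟩ := ih
      exact ⟨_, by rw [hdouble, he', pow_succ]; ring⟩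
  have hbound : ∀ n : ℕ, 2 ^ n * dist (e z') z' ≤ diam S := fun n => by
    obtain ⟨e', he'⟩ := hpow n
    exact he' ▸ dist_le_diam_of_mem hS (e' z').2 hz
  have hd : dist (e z') z' = 0 := by
    by_contra hne
    have hpos := lt_of_le_of_ne dist_nonneg (Ne.symm hne)
    obtain ⟨n, hn⟩ := pow_unbounded_of_one_lt (diam S / dist (e z') z') one_lt_two
    rw [div_lt_iff₀ hpos] at hn
    linarith [hbound n]
  exact dist_eq_zero.mp hd

theorem IsometryEquiv.map_center {S : Set P} {T : Set Q} {z : P} {w : Q} (hz : z ∈ S)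
    (hS : Bornology.IsBounded S) (hSsymm : MapsTo (pointReflection ℝ z) S S)
    (hTsymm : MapsTo (pointReflection ℝ w) T T) (φ : S ≃ᵢ T) : (φ ⟨z, hz⟩ : Q) = w := by
  have h := (φ.trans ((pointReflectionOn w hTsymm).trans φ.symm)).center_fixed hz hS hSsymm
  rw [IsometryEquiv.trans_apply, IsometryEquiv.trans_apply, φ.symm_apply_eq] at h
  exact pointReflection_fixed_iff.mp (congrArg Subtype.val h)

def lens (x y : P) : Set P := closedBall x (dist x y / 2) ∩ closedBall y (dist x y / 2)

theorem midpoint_mem_lens (x y : P) : midpoint ℝ x y ∈ lens x y := by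
  constructor <;> simp [dist_midpoint_left, dist_midpoint_right, div_eq_inv_mul]

theorem isBounded_lens (x y : P) : Bornology.IsBounded (lens x y) :=
  isBounded_closedBall.subset inter_subset_left

theorem mapsTo_pointReflection_lens (x y : P) :
    MapsTo (pointReflection ℝ (midpoint ℝ x y)) (lens x y) (lens x y) := by
  rintro p ⟨hpx, hpy⟩
  have hx := (pointReflection ℝ (midpoint ℝ x y)).dist_map p y
  have hy := (pointReflection ℝ (midpoint ℝ x y)).dist_map p x
  rw [pointReflection_midpoint_right] at hx
  rw [pointReflection_midpoint_left] at hy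
  exact ⟨by rwa [mem_closedBall, hx], by rwa [mem_closedBall, hy]⟩

theorem half_dist_le_of_mem_closedBall {x a : P} {s : ℝ} (ha : a ∈ closedBall x s) :
    dist x a / 2 ≤ s := by
  rw [mem_closedBall, dist_comm] at ha; linarith [dist_nonneg (x := x) (y := a)]

theorem lens_subset_closedBall {x a : P} {s : ℝ} (ha : a ∈ closedBall x s) :
    lens x a ⊆ closedBall x s :=
  inter_subset_left.trans (closedBall_subset_closedBall (half_dist_le_of_mem_closedBall ha))

theorem IsometricOn.bijOn_lens {f : P → Q} {x a : P} {s : ℝ}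
    (hf : IsometricOn f (closedBall x s)) (hsurj : SurjOn f (closedBall x s) (closedBall (f x) s))
    (ha : a ∈ closedBall x s) : BijOn f (lens x a) (lens (f x) (f a)) := by
  have hx : x ∈ closedBall x s := mem_closedBall_self (dist_nonneg.trans ha)
  have hr := half_dist_le_of_mem_closedBall ha
  have hlens := lens_subset_closedBall ha
  rw [lens, lens, hf x hx a ha]
  refine ⟨?_, (hf.mono hlens).injOn, ?_⟩
  · rintro p ⟨hpx, hpa⟩
    exact ⟨by rwa [mem_closedBall, hf p (hlens ⟨hpx, hpa⟩) x hx],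
      by rwa [mem_closedBall, hf p (hlens ⟨hpx, hpa⟩) a ha]⟩
  · rintro q ⟨hqx, hqa⟩
    obtain ⟨p, hp, rfl⟩ := hsurj (closedBall_subset_closedBall hr hqx)
    exact ⟨p, ⟨by rwa [mem_closedBall, ← hf p hp x hx], by rwa [mem_closedBall, ← hf p hp a ha]⟩,
      rfl⟩

theorem IsometricOn.map_midpoint {f : P → Q} {x a : P} {s : ℝ}
    (hf : IsometricOn f (closedBall x s)) (hsurj : SurjOn f (closedBall x s) (closedBall (f x) s))
    (ha : a ∈ closedBall x s) : f (midpoint ℝ x a) = midpoint ℝ (f x) (f a) :=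
  IsometryEquiv.map_center (midpoint_mem_lens x a) (isBounded_lens x a)
    (mapsTo_pointReflection_lens x a) (mapsTo_pointReflection_lens (f x) (f a))
    ((hf.mono (lens_subset_closedBall ha)).isometryEquiv (hf.bijOn_lens hsurj ha))

end Vaisala

section Rigidity

variable {E : Type*} [NormedAddCommGroup E]

theorem norm_add_nsmul_eq_of_forall_closedBall {k w : E} {τ : ℝ}
    (h : ∀ v ∈ closedBall k τ, ‖v + w‖ = ‖v‖) :
    ∀ j : ℕ, ∀ v : E, ‖v - k‖ + j * ‖w‖ ≤ τ → ‖v + j • w‖ = ‖v‖ := by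
  intro j
  induction j with
  | zero => simp
  | succ j ih =>
    intro v hv
    push_cast at hv
    have hvw : ‖(v + w) - k‖ + j * ‖w‖ ≤ τ := by
      have := norm_add_le (v - k) w
      rw [show v + w - k = v - k + w by abel]
      linarith
    rw [succ_nsmul', ← add_assoc, ih (v + w) hvw,
      h v (mem_closedBall_iff_norm.mpr (by nlinarith [norm_nonneg w, j.cast_nonneg (α := ℝ)]))]

variable [NormedSpace ℝ E]

-- The proof needs only `5 * (‖k‖ - τ) ≤ τ`, which is where `6 / 5` comes from.
theorem eq_zero_of_forall_closedBall_norm_add_eq {k w : E} {τ : ℝ} (hk : τ < ‖k‖)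
    (hk' : ‖k‖ ≤ 6 / 5 * τ) (h : ∀ v ∈ closedBall k τ, ‖v + w‖ = ‖v‖) : w = 0 := by
  set D := ‖k‖
  set m := D - τ
  have hm : 0 < m := sub_pos.mpr hk
  have hτ : 0 < τ := by linarith
  have hD : 0 < D := by linarith
  set a := (τ / D) • k
  set b := (m / D) • k
  have ha : ‖a‖ = τ := by
    rw [norm_smul, Real.norm_of_nonneg (by positivity), div_mul_cancel₀ _ hD.ne']
  have hb : ‖b‖ = m := by
    rw [norm_smul, Real.norm_of_nonneg (by positivity), div_mul_cancel₀ _ hD.ne']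
  have hab : a + b = k := by
    rw [← add_smul, ← add_div, show τ + m = D by ring, div_self hD.ne', one_smul]
  have hw : ‖w‖ ≤ 2 * m := by
    have hbw := h b (mem_closedBall_iff_norm.mpr (by
      rw [← hab, sub_add_cancel_right, norm_neg, ha]))
    have := norm_sub_le (b + w) b
    rw [add_sub_cancel_left] at this
    linarith
  have hsteps : ∀ j : ℕ, ‖b - j • w‖ = m → j * ‖w‖ ≤ 2 * m := fun j hj => by
    have := norm_sub_le (b - j • w) b
    rw [sub_sub_cancel_left, norm_neg, hj, hb, RCLike.norm_nsmul ℝ, nsmul_eq_mul] at this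
    linarith
  -- The points `b - j • w` stay on the sphere of radius `τ` about `k`, since `b - k = -a` and
  -- `‖a + j • w‖ = ‖a‖`; so `h` keeps their norm equal to `‖b‖`, which bounds `j • w`.
  have hwalk : ∀ j : ℕ, ‖b - j • w‖ = m := by
    intro j
    induction j with
    | zero => simpa using hb
    | succ j ih =>
      have hj := hsteps j ih
      have haj := norm_add_nsmul_eq_of_forall_closedBall h (j + 1) a (by
        rw [← hab, sub_add_cancel_left, norm_neg, hb]; push_cast; linarith)
      have hp : b - (j + 1) • w ∈ closedBall k τ := by
        rw [mem_closedBall_iff_norm, ← hab, show b - (j + 1) • w - (a + b) = -(a + (j + 1) • w) by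
          abel, norm_neg, haj, ha]
      rw [← h _ hp, show b - (j + 1) • w + w = b - j • w by rw [succ_nsmul]; abel, ih]
  by_contra hne
  obtain ⟨j, hj⟩ := exists_nat_gt (2 * m / ‖w‖)
  rw [div_lt_iff₀ (norm_pos_iff.mpr hne)] at hj
  linarith [hsteps j (hwalk j)]

theorem eq_of_forall_closedBall_dist_eq {u u' z : E} {τ : ℝ} (hu : dist u z ≤ 6 / 5 * τ)
    (h : ∀ x ∈ closedBall z τ, dist u' x = dist u x) : u' = u := by
  rcases le_or_gt (dist u z) τ with hle | hlt
  · simpa using h u hle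
  rw [← sub_eq_zero]
  refine eq_zero_of_forall_closedBall_norm_add_eq (k := u - z) (τ := τ) ?_ ?_ fun v hv => ?_
  · rwa [← dist_eq_norm]
  · rwa [← dist_eq_norm]
  · have hx : u - v ∈ closedBall z τ := by
      rw [mem_closedBall_iff_norm, dist_comm] at *
      rwa [show u - v - z = -(v - (u - z)) by abel, norm_neg]
    have := h _ hx
    rwa [dist_eq_norm, dist_eq_norm, sub_sub_cancel, show u' - (u - v) = v + (u' - u) by abel]
      at this

end Rigidity

section Continuation

variable {E F : Type*} [NormedAddCommGroup E] [NormedSpace ℝ E] [MetricSpace F]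
  {f : E → F} {z : E}

theorem eqOn_closedBall_of_le_six_fifths_mul (Φ : E ≃ᵢ F) {τ r : ℝ}
    (hf : IsometricOn f (closedBall z r)) (h : EqOn f Φ (closedBall z τ)) (hr : r ≤ 6 / 5 * τ) :
    EqOn f Φ (closedBall z r) := by
  rcases le_total r τ with hrτ | hτr
  · exact h.mono (closedBall_subset_closedBall hrτ)
  intro p hp
  have hball := closedBall_subset_closedBall (x := z) hτr
  have hp' : Φ.symm (f p) = p := eq_of_forall_closedBall_dist_eq (hp.trans hr) fun x hx => by
    rw [← Φ.dist_eq, Φ.apply_symm_apply, ← h hx, hf p hp x (hball hx)]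
  exact (Φ.apply_symm_apply (f p)).symm.trans (congrArg Φ hp')

theorem eqOn_closedBall_of_eqOn_closedBall (Φ : E ≃ᵢ F) {ρ R : ℝ}
    (hf : IsometricOn f (closedBall z R)) (hρ : 0 < ρ) (h : EqOn f Φ (closedBall z ρ)) :
    EqOn f Φ (closedBall z R) := by
  rcases lt_or_ge R 0 with hR | hR
  · simp [closedBall_eq_empty.mpr hR]
  have hgrow : ∀ k : ℕ, EqOn f Φ (closedBall z (min ((6 / 5) ^ k * ρ) R)) := by
    intro k
    induction k with
    | zero => simpa using h.mono (closedBall_subset_closedBall (min_le_left ρ R))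
    | succ k ih =>
      refine eqOn_closedBall_of_le_six_fifths_mul Φ
        (hf.mono (closedBall_subset_closedBall (min_le_right _ _))) ih ?_
      have : 0 < (6 / 5 : ℝ) ^ k * ρ := by positivity
      rw [pow_succ, mul_comm _ (6 / 5 : ℝ), mul_assoc, mul_min_of_nonneg _ _ (by norm_num)]
      exact min_le_min_left _ (by linarith)
  obtain ⟨k, hk⟩ := pow_unbounded_of_one_lt (R / ρ) (by norm_num : (1 : ℝ) < 6 / 5)
  rw [div_lt_iff₀ hρ] at hk
  simpa [min_eq_right hk.le] using hgrow k

theorem eq_of_eventuallyEq_of_isometricOn (Φ : E ≃ᵢ F) {ε : E → ℝ} (hε : ∀ x, 0 < ε x)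
    (hf : ∀ x, IsometricOn f (closedBall x (ε x))) {x₁ : E} (h : f =ᶠ[𝓝 x₁] Φ) : f = Φ := by
  set S := {x | f =ᶠ[𝓝 x] Φ}
  have hclosed : IsClosed S := by
    refine isClosed_of_closure_subset fun x hx => ?_
    obtain ⟨x', hx'S, hxx'⟩ := Metric.mem_closure_iff.mp hx (ε x / 2) (by linarith [hε x])
    obtain ⟨ρ, hρ, hρS⟩ := nhds_basis_closedBall.eventually_iff.mp hx'S
    have hfx' : IsometricOn f (closedBall x' (ε x / 2)) :=
      (hf x).mono (closedBall_subset_closedBall' (by rw [dist_comm]; linarith))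
    have heq := eqOn_closedBall_of_eqOn_closedBall Φ hfx' hρ fun y hy => hρS hy
    filter_upwards [isOpen_ball.mem_nhds (mem_ball.mpr hxx' : x ∈ ball x' (ε x / 2))]
      with y hy using heq (ball_subset_closedBall hy)
  have hS : S = univ := IsClopen.eq_univ ⟨hclosed, isOpen_setOfPred_eventually_nhds⟩ ⟨x₁, h⟩
  funext x
  exact (hS ▸ mem_univ x : x ∈ S).eq_of_nhds

end Continuation

section DyadicExtension

variable {E F : Type*} [NormedAddCommGroup E] [NormedAddCommGroup F] {s : ℝ}

theorem exists_norm_le_two_pow_mul (hs : 0 < s) (v : E) : ∃ n : ℕ, ‖v‖ ≤ 2 ^ n * s := by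
  obtain ⟨n, hn⟩ := pow_unbounded_of_one_lt (‖v‖ / s) one_lt_two
  exact ⟨n, ((div_lt_iff₀ hs).mp hn).le⟩

theorem norm_le_two_pow_mul_of_le {v : E} {n m : ℕ} (hv : ‖v‖ ≤ 2 ^ n * s) (hnm : n ≤ m) :
    ‖v‖ ≤ 2 ^ m * s := by
  have hs : 0 ≤ s := nonneg_of_mul_nonneg_right ((norm_nonneg v).trans hv) (by positivity)
  exact hv.trans (by gcongr; norm_num)

variable [NormedSpace ℝ E] [NormedSpace ℝ F] {g : E → F}

theorem inv_two_pow_smul_mem_closedBall {v : E} {n : ℕ} (hv : ‖v‖ ≤ 2 ^ n * s) :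
    ((2 : ℝ) ^ n)⁻¹ • v ∈ closedBall 0 s := by
  rw [mem_closedBall_zero_iff, norm_smul, norm_inv, norm_pow, Real.norm_two,
    inv_mul_le_iff₀ (by positivity)]
  exact hv

theorem IsometricOn.map_inv_two_smul (hg0 : g 0 = 0) (hg : IsometricOn g (closedBall 0 s))
    (hsurj : SurjOn g (closedBall 0 s) (closedBall 0 s)) {v : E} (hv : v ∈ closedBall 0 s) :
    g ((2 : ℝ)⁻¹ • v) = (2 : ℝ)⁻¹ • g v := by
  have := hg.map_midpoint (by rwa [hg0]) hv
  rwa [midpoint_eq_smul_add, midpoint_eq_smul_add, hg0, zero_add, zero_add, invOf_eq_inv] at this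

noncomputable def dyadicRescale (g : E → F) (n : ℕ) (v : E) : F :=
  (2 : ℝ) ^ n • g (((2 : ℝ) ^ n)⁻¹ • v)

theorem dyadicRescale_zero (g : E → F) (v : E) : dyadicRescale g 0 v = g v := by
  simp [dyadicRescale]

theorem dist_dyadicRescale (hg : IsometricOn g (closedBall 0 s)) {v w : E} {n : ℕ} (hv : ‖v‖ ≤ 2 ^ n * s) (hw : ‖w‖ ≤ 2 ^ n * s) :
    dist (dyadicRescale g n v) (dyadicRescale g n w) = dist v w := by
  rw [dyadicRescale, dyadicRescale, dist_smul₀, hg _ (inv_two_pow_smul_mem_closedBall hv) _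
    (inv_two_pow_smul_mem_closedBall hw), dist_smul₀, ← mul_assoc, ← norm_mul,
    mul_inv_cancel₀ (by positivity), norm_one, one_mul]

variable (hg0 : g 0 = 0) (hg : IsometricOn g (closedBall 0 s))
  (hsurj : SurjOn g (closedBall 0 s) (closedBall 0 s))
include hg0 hg hsurj

theorem dyadicRescale_succ {v : E} {n : ℕ} (hv : ‖v‖ ≤ 2 ^ n * s) :
    dyadicRescale g (n + 1) v = dyadicRescale g n v := by
  have hsmul : ((2 : ℝ) ^ (n + 1))⁻¹ • v = (2 : ℝ)⁻¹ • (((2 : ℝ) ^ n)⁻¹ • v) := by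
    rw [pow_succ, mul_inv, mul_comm, mul_smul]
  rw [dyadicRescale, hsmul, hg.map_inv_two_smul hg0 hsurj (inv_two_pow_smul_mem_closedBall hv),
    smul_smul, pow_succ, mul_assoc, mul_inv_cancel₀ two_ne_zero, mul_one, dyadicRescale]

theorem dyadicRescale_eq_of_le {v : E} {n m : ℕ} (hv : ‖v‖ ≤ 2 ^ n * s) (hnm : n ≤ m) :
    dyadicRescale g m v = dyadicRescale g n v := by
  induction m, hnm using Nat.le_induction with
  | base => rfl
  | succ m hnm ih =>
    rw [dyadicRescale_succ hg0 hg hsurj (norm_le_two_pow_mul_of_le hv hnm), ih]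

theorem exists_isometryEquiv_eqOn_closedBall_zero (hs : 0 < s) :
    ∃ Φ : E ≃ᵢ F, EqOn Φ g (closedBall 0 s) := by
  choose N hN using exists_norm_le_two_pow_mul (E := E) hs
  set Φ : E → F := fun v => dyadicRescale g (N v) v
  have hΦ : ∀ v n, ‖v‖ ≤ 2 ^ n * s → Φ v = dyadicRescale g n v := fun v n hn => by
    rcases le_total (N v) n with h | h
    · exact (dyadicRescale_eq_of_le hg0 hg hsurj (hN v) h).symm
    · exact dyadicRescale_eq_of_le hg0 hg hsurj hn h
  have hiso : Isometry Φ := Isometry.of_dist_eq fun v w => by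
    have hv := norm_le_two_pow_mul_of_le (hN v) (le_max_left (N v) (N w))
    have hw := norm_le_two_pow_mul_of_le (hN w) (le_max_right (N v) (N w))
    rw [hΦ v _ hv, hΦ w _ hw, dist_dyadicRescale hg hv hw]
  have hsurjΦ : Function.Surjective Φ := fun y => by
    obtain ⟨n, hn⟩ := exists_norm_le_two_pow_mul hs y
    obtain ⟨a, ha, hay⟩ := hsurj (inv_two_pow_smul_mem_closedBall hn)
    have han : ‖(2 : ℝ) ^ n • a‖ ≤ 2 ^ n * s := by
      rw [norm_smul, norm_pow, Real.norm_two]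
      exact mul_le_mul_of_nonneg_left (mem_closedBall_zero_iff.mp ha) (by positivity)
    refine ⟨(2 : ℝ) ^ n • a, ?_⟩
    rw [hΦ _ n han, dyadicRescale, inv_smul_smul₀ (by positivity), hay,
      smul_inv_smul₀ (by positivity)]
  refine ⟨IsometryEquiv.mk' Φ (Function.surjInv hsurjΦ) (Function.surjInv_eq hsurjΦ) hiso,
    fun v hv => ?_⟩
  exact (hΦ v 0 (by simpa using hv)).trans (dyadicRescale_zero g v)

end DyadicExtension

section AffineExtension

variable {E F : Type*} [NormedAddCommGroup E] [NormedSpace ℝ E] [NormedAddCommGroup F]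
  [NormedSpace ℝ F]

theorem exists_isometryEquiv_eqOn_closedBall {f : E → F} {x : E} {s : ℝ} (hs : 0 < s)
    (hf : IsometricOn f (closedBall x s)) (hsurj : SurjOn f (closedBall x s) (closedBall (f x) s)) :
    ∃ Φ : E ≃ᵢ F, EqOn Φ f (closedBall x s) := by
  have hmem : ∀ v : E, x + v ∈ closedBall x s ↔ v ∈ closedBall 0 s := fun v => by
    rw [add_mem_closedBall_iff_norm, mem_closedBall_zero_iff]
  obtain ⟨Ψ, hΨ⟩ := exists_isometryEquiv_eqOn_closedBall_zero (g := fun v => f (x + v) - f x)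
    (by simp)
    (fun a ha b hb => by
      rw [dist_sub_right, hf _ ((hmem a).2 ha) _ ((hmem b).2 hb), dist_add_left])
    (fun y hy => by
      obtain ⟨p, hp, hpy⟩ := hsurj (add_mem_closedBall_iff_norm.2 (mem_closedBall_zero_iff.1 hy))
      exact ⟨p - x, (hmem _).1 (by rwa [add_sub_cancel]), by simp [hpy]⟩)
    hs
  refine ⟨(IsometryEquiv.subRight x).trans (Ψ.trans (IsometryEquiv.addLeft (f x))), fun p hp => ?_⟩
  have := hΨ ((hmem (p - x)).1 (by rwa [add_sub_cancel]))
  simp [this]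

theorem eq_of_eqOn_closedBall_of_map_convexComb {W V : E → F}
    (hW : ∀ x y : E, ∀ t ∈ Icc (0 : ℝ) 1, W ((1 - t) • x + t • y) = (1 - t) • W x + t • W y)
    (hV : ∀ x y : E, ∀ t ∈ Icc (0 : ℝ) 1, V ((1 - t) • x + t • y) = (1 - t) • V x + t • V y)
    {x₀ : E} {r : ℝ} (hr : 0 < r) (h : EqOn W V (closedBall x₀ r)) : W = V := by
  funext w
  set d := ‖w - x₀‖
  set t := r / (r + d)
  have ht0 : 0 < t := by positivity
  have ht1 : t ≤ 1 := (div_le_one (by positivity)).mpr (by linarith [norm_nonneg (w - x₀)])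
  have hp : (1 - t) • x₀ + t • w ∈ closedBall x₀ r := by
    rw [mem_closedBall_iff_norm, show (1 - t) • x₀ + t • w - x₀ = t • (w - x₀) by module,
      norm_smul, Real.norm_of_nonneg ht0.le, div_mul_eq_mul_div, div_le_iff₀ (by positivity)]
    nlinarith [norm_nonneg (w - x₀)]
  have := h hp
  rw [hW _ _ t ⟨ht0.le, ht1⟩, hV _ _ t ⟨ht0.le, ht1⟩, h (mem_closedBall_self hr.le)] at this
  exact smul_right_injective F ht0.ne' (add_left_cancel this)

end AffineExtension

theorem mori_lemma_affine_extension_general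
    {X Y : Type*} [NormedAddCommGroup X] [NormedSpace ℝ X]
    [NormedAddCommGroup Y] [NormedSpace ℝ Y]
    (U : X → Y)
    (ε : X → ℝ) (hεpos : ∀ x₀ : X, 0 < ε x₀)
    (hiso : ∀ x₀ : X, ∀ u ∈ Metric.closedBall x₀ (ε x₀), ∀ v ∈ Metric.closedBall x₀ (ε x₀),
      ‖U u - U v‖ = ‖u - v‖)
    (x₀ : X) (hint : (interior (U '' Metric.closedBall x₀ (ε x₀))).Nonempty) :
    ∃! Ubar : X → Y,
      (∀ x y : X, ∀ t ∈ Set.Icc (0 : ℝ) 1,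
        Ubar ((1 - t) • x + t • y) = (1 - t) • Ubar x + t • Ubar y) ∧
      (∀ x y : X, ‖Ubar x - Ubar y‖ = ‖x - y‖) ∧
      (∀ x ∈ Metric.closedBall x₀ (ε x₀), Ubar x = U x) := by
  have hloc : ∀ x, IsometricOn U (closedBall x (ε x)) := fun x a ha b hb => by
    rw [dist_eq_norm, dist_eq_norm, hiso x a ha b hb]
  obtain ⟨y₁, hy₁⟩ := hint
  obtain ⟨r, hr, hball⟩ := nhds_basis_closedBall.mem_iff.mp (mem_interior_iff_mem_nhds.mp hy₁)
  obtain ⟨x₁, hx₁, rfl⟩ := hball (mem_closedBall_self hr.le)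
  have hs : 0 < min r (ε x₁) := lt_min hr (hεpos x₁)
  obtain ⟨Φ, hΦ⟩ := exists_isometryEquiv_eqOn_closedBall hs
    ((hloc x₁).mono (closedBall_subset_closedBall (min_le_right _ _)))
    ((hloc x₀).surjOn_closedBall hx₁ hball (min_le_left _ _))
  have hUΦ : U = Φ := eq_of_eventuallyEq_of_isometricOn Φ hεpos hloc
    (Filter.eventually_of_mem (closedBall_mem_nhds x₁ hs) fun x hx => (hΦ hx).symm)
  set A := Φ.toRealAffineIsometryEquiv
  have hA : ∀ x y : X, ∀ t ∈ Icc (0 : ℝ) 1, A ((1 - t) • x + t • y) = (1 - t) • A x + t • A y :=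
    fun x y t _ => by
      simpa [AffineMap.lineMap_apply_module] using A.toAffineEquiv.apply_lineMap x y t
  refine ⟨A, ⟨hA, fun x y => by rw [← dist_eq_norm, ← dist_eq_norm, A.dist_map],
    fun x _ => (congrFun hUΦ x).symm⟩, fun W ⟨hW, _, hWU⟩ => ?_⟩
  exact eq_of_eqOn_closedBall_of_map_convexComb hW hA (hεpos x₀) fun x hx =>
    (hWU x hx).trans (congrFun hUΦ x)

/-- Mori's lemma: let `U : X → Y` be a surjection between real Banach spaces which is
isometric on the closed ball `B(x₀, ε x₀)` around each point `x₀`. If for some `x₀` the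
image `U(B(x₀, ε x₀))` has non-empty interior, then there is a unique affine isometric map
`Ū : X → Y` agreeing with `U` on `B(x₀, ε x₀)`. -/
theorem mori_lemma_affine_extension
    {X Y : Type*} [NormedAddCommGroup X] [NormedSpace ℝ X] [CompleteSpace X]
    [NormedAddCommGroup Y] [NormedSpace ℝ Y] [CompleteSpace Y]
    (U : X → Y) (hsurj : Function.Surjective U)
    (ε : X → ℝ) (hεpos : ∀ x₀ : X, 0 < ε x₀)
    (hiso : ∀ x₀ : X, ∀ u ∈ Metric.closedBall x₀ (ε x₀), ∀ v ∈ Metric.closedBall x₀ (ε x₀),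
      ‖U u - U v‖ = ‖u - v‖)
    (x₀ : X) (hint : (interior (U '' Metric.closedBall x₀ (ε x₀))).Nonempty) :
    ∃! Ubar : X → Y,
      (∀ x y : X, ∀ t ∈ Set.Icc (0 : ℝ) 1,
        Ubar ((1 - t) • x + t • y) = (1 - t) • Ubar x + t • Ubar y) ∧
      (∀ x y : X, ‖Ubar x - Ubar y‖ = ‖x - y‖) ∧
      (∀ x ∈ Metric.closedBall x₀ (ε x₀), Ubar x = U x) :=
  mori_lemma_affine_extension_general U ε hεpos hiso x₀ hint
end

section
/- Let X and Y be real Banach spaces, let x₀ ∈ X, y₀ ∈ Y, r > 0, and let f : B(x₀, r) → B(y₀, r) be a surjective map between the closed balls satisfying ‖f(u) − f(v)‖ = ‖u − v‖ for all u, v ∈ B(x₀, r). Then there exists a unique affine isometry F : X → Y (i.e. F is surjective, F((1−t)x + t y) = (1−t)F(x) + t F(y) for all x, y ∈ X, t ∈ [0,1], and ‖F(x) − F(y)‖ = ‖x − y‖ for all x, y ∈ X) whose restriction to B(x₀, r) equals f. -/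
/-!
Following Väisälä's proof of the Mazur–Ulam theorem, the midpoint of `u` and `v` is
characterised metrically as the only point of a decreasing sequence of sets `Hₙ`: `H₀` is the
set of points at distance `‖u - v‖ / 2` from both, and `Hₙ₊₁` keeps the points of `Hₙ` within
`‖u - v‖ / 2ⁿ⁺¹` of all of `Hₙ`. The reflection through the midpoint preserves every `Hₙ`, which
puts the midpoint in all of them. When `‖u - x₀‖ + ‖v - x₀‖ + ‖u - v‖ ≤ 2r` these sets stay
inside the ball, so a surjective isometry between balls, which has to fix the centres, preserves
such midpoints. In particular it commutes with halving about the centre, so the rescalings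
`x ↦ 2ⁿ g (2⁻ⁿ x)` of the centred map agree wherever they are defined and glue to a surjective
isometry of the whole space that preserves midpoints, hence is affine. An affine map is
determined on each segment from `x₀` by its values near `x₀`, which gives uniqueness.
-/

open Metric Filter Function Set

section MetricMidpointSets

variable {α β : Type*} [PseudoMetricSpace α] [PseudoMetricSpace β]

def metricMidpointSets (u v : α) : ℕ → Set α
  | 0 => {z | dist z u = dist u v / 2 ∧ dist z v = dist u v / 2}
  | n + 1 => {z ∈ metricMidpointSets u v n |
      ∀ w ∈ metricMidpointSets u v n, dist z w ≤ dist u v / 2 ^ (n + 1)}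

theorem metricMidpointSets_subset_zero (u v : α) :
    ∀ n, metricMidpointSets u v n ⊆ metricMidpointSets u v 0
  | 0 => subset_rfl
  | n + 1 => fun _ hz => metricMidpointSets_subset_zero u v n hz.1

theorem dist_le_of_mem_metricMidpointSets {u v z w : α} :
    ∀ {n}, z ∈ metricMidpointSets u v n → w ∈ metricMidpointSets u v n →
      dist z w ≤ dist u v / 2 ^ n
  | 0, hz, hw => by
    have := dist_triangle_right z w u
    rw [hz.1, hw.1] at this
    simpa using this
  | _ + 1, hz, hw => hz.2 _ hw.1

theorem metricMidpointSets_comm (u v : α) (n : ℕ) :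
    metricMidpointSets v u n = metricMidpointSets u v n := by
  induction n with
  | zero => ext; simp only [metricMidpointSets, mem_ofPred_eq, dist_comm v u, and_comm]
  | succ n ih => ext; simp only [metricMidpointSets, mem_ofPred_eq, ih, dist_comm v u]

theorem metricMidpointSets_zero_subset_closedBall {u v x₀ : α} {r : ℝ}
    (h : dist u x₀ + dist v x₀ + dist u v ≤ 2 * r) :
    metricMidpointSets u v 0 ⊆ closedBall x₀ r := by
  rintro z ⟨hzu, hzv⟩
  have := dist_triangle z u x₀
  have := dist_triangle z v x₀
  rw [mem_closedBall]
  linarith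

theorem mem_metricMidpointSets_iff_of_dist_eq {s : Set α} {g : α → β}
    (hg : ∀ x ∈ s, ∀ y ∈ s, dist (g x) (g y) = dist x y) {u v : α} (hu : u ∈ s) (hv : v ∈ s)
    (hs : metricMidpointSets u v 0 ⊆ s) (hgs : metricMidpointSets (g u) (g v) 0 ⊆ g '' s)
    (n : ℕ) {z : α} (hz : z ∈ s) :
    g z ∈ metricMidpointSets (g u) (g v) n ↔ z ∈ metricMidpointSets u v n := by
  induction n generalizing z with
  | zero => simp only [metricMidpointSets, mem_ofPred_eq, hg z hz u hu, hg z hz v hv, hg u hu v hv]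
  | succ n ih =>
    simp only [metricMidpointSets, mem_ofPred_eq, ih hz, hg u hu v hv]
    refine and_congr_right fun _ => ⟨fun h w hw => ?_, fun h w' hw' => ?_⟩
    · have hws := hs (metricMidpointSets_subset_zero u v n hw)
      rw [← hg z hz w hws]
      exact h (g w) ((ih hws).2 hw)
    · obtain ⟨w, hws, rfl⟩ := hgs (metricMidpointSets_subset_zero _ _ n hw')
      rw [hg z hz w hws]
      exact h w ((ih hws).1 hw')

end MetricMidpointSets

section Torsor

variable {V P : Type*} [NormedAddCommGroup V] [NormedSpace ℝ V] [MetricSpace P]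
  [NormedAddTorsor V P]

theorem midpoint_mem_metricMidpointSets (u v : P) (n : ℕ) :
    midpoint ℝ u v ∈ metricMidpointSets u v n := by
  induction n with
  | zero =>
    refine ⟨?_, ?_⟩
    · rw [dist_midpoint_left, Real.norm_two]; ring
    · rw [dist_midpoint_right, Real.norm_two]; ring
  | succ n ih =>
    refine ⟨ih, fun w hw => ?_⟩
    set σ := AffineIsometryEquiv.pointReflection ℝ (midpoint ℝ u v)
    have hσw : σ w ∈ metricMidpointSets u v n := by
      have := mem_metricMidpointSets_iff_of_dist_eq (s := univ) (fun x _ y _ => σ.dist_map x y)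
        (mem_univ u) (mem_univ v) (subset_univ _)
        (by rw [image_univ, σ.surjective.range_eq]; exact subset_univ _) n (mem_univ w)
      rw [AffineIsometryEquiv.pointReflection_midpoint_left,
        AffineIsometryEquiv.pointReflection_midpoint_right, metricMidpointSets_comm] at this
      exact this.2 hw
    have := dist_le_of_mem_metricMidpointSets hσw hw
    rw [AffineIsometryEquiv.dist_pointReflection_self_real] at this
    rw [pow_succ, ← div_div]
    linarith

theorem eq_midpoint_of_forall_mem_metricMidpointSets {u v z : P}
    (hz : ∀ n, z ∈ metricMidpointSets u v n) : z = midpoint ℝ u v :=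
  dist_le_zero.1 <| ge_of_tendsto'
    (tendsto_const_nhds.div_atTop (tendsto_pow_atTop_atTop_of_one_lt one_lt_two))
    fun n => dist_le_of_mem_metricMidpointSets (hz n) (midpoint_mem_metricMidpointSets u v n)

end Torsor

structure IsBallIsometry_s12 {α β : Type*} [PseudoMetricSpace α] [PseudoMetricSpace β]
    (f : α → β) (x₀ : α) (y₀ : β) (r : ℝ) : Prop where
  dist_eq : ∀ u ∈ closedBall x₀ r, ∀ v ∈ closedBall x₀ r, dist (f u) (f v) = dist u v
  closedBall_subset_image : closedBall y₀ r ⊆ f '' closedBall x₀ r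

namespace IsBallIsometry_s12

section

variable {α F : Type*} [PseudoMetricSpace α] [NormedAddCommGroup F] [NormedSpace ℝ F]
  {f : α → F} {x₀ : α} {y₀ : F} {r : ℝ}

theorem map_center (hf : IsBallIsometry_s12 f x₀ y₀ r) (hr : 0 ≤ r) : f x₀ = y₀ := by
  by_contra hne
  set c := f x₀ - y₀
  have hc : 0 < ‖c‖ := norm_pos_iff.2 (sub_ne_zero.2 hne)
  -- the point of the target ball diametrically opposite to `f x₀` is too far from it
  obtain ⟨a, ha, hfa⟩ := hf.closedBall_subset_image
    (show y₀ - (r / ‖c‖) • c ∈ closedBall y₀ r by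
      rw [mem_closedBall_iff_norm, sub_sub_cancel_left, norm_neg, norm_smul, Real.norm_eq_abs,
        abs_of_nonneg (by positivity), div_mul_cancel₀ _ hc.ne'])
  have hfar : dist (f a) (f x₀) = r + ‖c‖ := by
    rw [hfa, dist_eq_norm, show y₀ - (r / ‖c‖) • c - f x₀ = -((r / ‖c‖ + 1) • c) by
        simp only [c]; module,
      norm_neg, norm_smul, Real.norm_eq_abs, abs_of_pos (by positivity), add_mul,
      div_mul_cancel₀ _ hc.ne', one_mul]
  rw [hf.dist_eq a ha x₀ (mem_closedBall_self hr)] at hfar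
  linarith [mem_closedBall.1 ha]

end

variable {E F : Type*} [NormedAddCommGroup E] [NormedSpace ℝ E]
  [NormedAddCommGroup F] [NormedSpace ℝ F] {f g : E → F} {x₀ : E} {y₀ : F} {r : ℝ}

theorem map_midpoint_s12 (hf : IsBallIsometry_s12 f x₀ y₀ r) {u v : E}
    (h : dist u x₀ + dist v x₀ + dist u v ≤ 2 * r) :
    f (midpoint ℝ u v) = midpoint ℝ (f u) (f v) := by
  have hu : u ∈ closedBall x₀ r := by
    rw [mem_closedBall]; linarith [dist_triangle u v x₀]
  have hv : v ∈ closedBall x₀ r := by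
    rw [mem_closedBall]; linarith [dist_triangle_left v x₀ u]
  have hr : 0 ≤ r := dist_nonneg.trans (mem_closedBall.1 hu)
  have hx₀ := mem_closedBall_self (x := x₀) hr
  have hs := metricMidpointSets_zero_subset_closedBall h
  have ht : metricMidpointSets (f u) (f v) 0 ⊆ f '' closedBall x₀ r := by
    refine (metricMidpointSets_zero_subset_closedBall ?_).trans hf.closedBall_subset_image
    rwa [← hf.map_center hr, hf.dist_eq u hu x₀ hx₀, hf.dist_eq v hv x₀ hx₀, hf.dist_eq u hu v hv]
  exact eq_midpoint_of_forall_mem_metricMidpointSets fun n =>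
    (mem_metricMidpointSets_iff_of_dist_eq hf.dist_eq hu hv hs ht n
      (hs (midpoint_mem_metricMidpointSets u v 0))).2 (midpoint_mem_metricMidpointSets u v n)

end IsBallIsometry_s12

theorem eventually_le_two_pow_mul {r : ℝ} (hr : 0 < r) (a : ℝ) :
    ∀ᶠ n : ℕ in atTop, a ≤ 2 ^ n * r :=
  ((tendsto_pow_atTop_atTop_of_one_lt one_lt_two).atTop_mul_const hr).eventually_ge_atTop a

section

variable {E F : Type*} [NormedAddCommGroup E] [NormedAddCommGroup F] {f : E → F} {x₀ : E}
  {y₀ : F} {r : ℝ}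

theorem norm_le_two_pow_ceil_mul (hr : 0 < r) (x : E) : ‖x‖ ≤ 2 ^ ⌈‖x‖ / r⌉₊ * r := by
  rw [← div_le_iff₀ hr]
  exact (Nat.le_ceil _).trans (by exact_mod_cast Nat.lt_two_pow_self.le)

theorem IsBallIsometry_s12.translate (hf : IsBallIsometry_s12 f x₀ y₀ r) :
    IsBallIsometry_s12 (fun u => f (u + x₀) - y₀) 0 0 r := by
  have hmem : ∀ u : E, u ∈ closedBall 0 r → u + x₀ ∈ closedBall x₀ r := fun u hu => by
    rwa [mem_closedBall_iff_norm, add_sub_cancel_right, ← mem_closedBall_zero_iff]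
  refine ⟨fun u hu v hv => ?_, fun w hw => ?_⟩
  · rw [dist_sub_right, hf.dist_eq _ (hmem u hu) _ (hmem v hv), dist_add_right]
  · obtain ⟨x, hx, hfx⟩ := hf.closedBall_subset_image (show w + y₀ ∈ closedBall y₀ r by
      rwa [mem_closedBall_iff_norm, add_sub_cancel_right, ← mem_closedBall_zero_iff])
    refine ⟨x - x₀, ?_, by simp [hfx]⟩
    rwa [mem_closedBall_zero_iff, ← mem_closedBall_iff_norm]

end

section Extension

variable {E F : Type*} [NormedAddCommGroup E] [NormedSpace ℝ E]
  [NormedAddCommGroup F] [NormedSpace ℝ F] {g : E → F} {r : ℝ}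

theorem inv_smul_mem_closedBall_zero_iff {c : ℝ} (hc : 0 < c) {x : E} :
    c⁻¹ • x ∈ closedBall 0 r ↔ x ∈ closedBall 0 (c * r) := by
  rw [mem_closedBall_zero_iff, mem_closedBall_zero_iff, norm_smul, norm_inv,
    Real.norm_of_nonneg hc.le, inv_mul_le_iff₀ hc]

noncomputable def rescale (g : E → F) (c : ℝ) (x : E) : F := c • g (c⁻¹ • x)

-- Any `n` with `‖x‖ ≤ 2 ^ n * r` gives the same value (`ballExtension_eq_rescale`).
noncomputable def ballExtension (g : E → F) (r : ℝ) (x : E) : F := rescale g (2 ^ ⌈‖x‖ / r⌉₊) x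

namespace IsBallIsometry_s12

theorem rescale_of_pos (hg : IsBallIsometry_s12 g 0 0 r) {c : ℝ} (hc : 0 < c) :
    IsBallIsometry_s12 (rescale g c) 0 0 (c * r) := by
  refine ⟨fun u hu v hv => ?_, fun w hw => ?_⟩
  · rw [rescale, rescale, dist_smul₀,
      hg.dist_eq _ ((inv_smul_mem_closedBall_zero_iff hc).2 hu) _
        ((inv_smul_mem_closedBall_zero_iff hc).2 hv),
      dist_smul₀, ← mul_assoc, norm_inv, mul_inv_cancel₀ (norm_ne_zero_iff.2 hc.ne'), one_mul]
  · obtain ⟨x, hx, hgx⟩ := hg.closedBall_subset_image ((inv_smul_mem_closedBall_zero_iff hc).2 hw)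
    refine ⟨c • x, (inv_smul_mem_closedBall_zero_iff hc).1 (by rwa [inv_smul_smul₀ hc.ne']), ?_⟩
    rw [rescale, inv_smul_smul₀ hc.ne', hgx, smul_inv_smul₀ hc.ne']

theorem map_half_smul (hg : IsBallIsometry_s12 g 0 0 r) {x : E} (hx : x ∈ closedBall 0 r) :
    g ((2 : ℝ)⁻¹ • x) = (2 : ℝ)⁻¹ • g x := by
  have hr : 0 ≤ r := dist_nonneg.trans (mem_closedBall.1 hx)
  have h := hg.map_midpoint_s12 (u := 0) (v := x) (by
    rw [dist_self, dist_zero_right, dist_zero_left]; linarith [mem_closedBall_zero_iff.1 hx])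
  simpa [midpoint_eq_smul_add, hg.map_center hr] using h

theorem rescale_two_pow_succ (hg : IsBallIsometry_s12 g 0 0 r) {n : ℕ} {x : E}
    (hx : ‖x‖ ≤ 2 ^ n * r) : rescale g (2 ^ (n + 1)) x = rescale g (2 ^ n) x := by
  have h := (hg.rescale_of_pos (pow_pos two_pos n)).map_half_smul (mem_closedBall_zero_iff.2 hx)
  calc rescale g (2 ^ (n + 1)) x = (2 : ℝ) • rescale g (2 ^ n) ((2 : ℝ)⁻¹ • x) := by
        simp only [rescale, pow_succ, mul_inv, mul_smul, smul_comm (2 : ℝ)]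
    _ = rescale g (2 ^ n) x := by rw [h, smul_inv_smul₀ two_ne_zero]

theorem rescale_two_pow_eq_of_le (hg : IsBallIsometry_s12 g 0 0 r) {m n : ℕ} (hmn : m ≤ n) {x : E}
    (hx : ‖x‖ ≤ 2 ^ m * r) : rescale g (2 ^ n) x = rescale g (2 ^ m) x := by
  have hr : 0 ≤ r := nonneg_of_mul_nonneg_right ((norm_nonneg x).trans hx) (by positivity)
  induction n, hmn using Nat.le_induction with
  | base => rfl
  | succ n hmn ih =>
    rw [hg.rescale_two_pow_succ (hx.trans (by gcongr; exact one_le_two)), ih]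

theorem ballExtension_eq_rescale (hg : IsBallIsometry_s12 g 0 0 r) (hr : 0 < r) {n : ℕ} {x : E}
    (hx : ‖x‖ ≤ 2 ^ n * r) : ballExtension g r x = rescale g (2 ^ n) x := by
  rw [ballExtension,
    ← hg.rescale_two_pow_eq_of_le (le_max_left _ n) (norm_le_two_pow_ceil_mul hr x),
    hg.rescale_two_pow_eq_of_le (le_max_right _ n) hx]

theorem eqOn_ballExtension (hg : IsBallIsometry_s12 g 0 0 r) (hr : 0 < r) :
    EqOn (ballExtension g r) g (closedBall 0 r) := fun x hx => by
  rw [hg.ballExtension_eq_rescale hr (n := 0) (by simpa using hx)]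
  simp [rescale]

theorem isometry_ballExtension (hg : IsBallIsometry_s12 g 0 0 r) (hr : 0 < r) :
    Isometry (ballExtension g r) := by
  refine Isometry.of_dist_eq fun x y => ?_
  obtain ⟨n, hx, hy⟩ :=
    ((eventually_le_two_pow_mul hr ‖x‖).and (eventually_le_two_pow_mul hr ‖y‖)).exists
  rw [hg.ballExtension_eq_rescale hr hx, hg.ballExtension_eq_rescale hr hy]
  exact (hg.rescale_of_pos (by positivity)).dist_eq x (mem_closedBall_zero_iff.2 hx)
    y (mem_closedBall_zero_iff.2 hy)

theorem surjective_ballExtension (hg : IsBallIsometry_s12 g 0 0 r) (hr : 0 < r) :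
    Surjective (ballExtension g r) := fun w => by
  obtain ⟨n, hw⟩ := (eventually_le_two_pow_mul hr ‖w‖).exists
  obtain ⟨x, hx, rfl⟩ :=
    (hg.rescale_of_pos (by positivity)).closedBall_subset_image (mem_closedBall_zero_iff.2 hw)
  exact ⟨x, hg.ballExtension_eq_rescale hr (mem_closedBall_zero_iff.1 hx)⟩

theorem map_midpoint_ballExtension (hg : IsBallIsometry_s12 g 0 0 r) (hr : 0 < r) (x y : E) :
    ballExtension g r (midpoint ℝ x y) =
      midpoint ℝ (ballExtension g r x) (ballExtension g r y) := by
  obtain ⟨n, hn⟩ := (eventually_le_two_pow_mul hr (‖x‖ + ‖y‖)).exists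
  have hmid : ‖midpoint ℝ x y‖ ≤ ‖x‖ + ‖y‖ := by
    rw [midpoint_eq_smul_add, norm_smul, invOf_eq_inv, norm_inv, Real.norm_two]
    linarith [norm_add_le x y, norm_nonneg x, norm_nonneg y]
  rw [hg.ballExtension_eq_rescale hr (hmid.trans hn),
    hg.ballExtension_eq_rescale hr ((le_add_of_nonneg_right (norm_nonneg y)).trans hn),
    hg.ballExtension_eq_rescale hr ((le_add_of_nonneg_left (norm_nonneg x)).trans hn)]
  refine (hg.rescale_of_pos (by positivity)).map_midpoint_s12 ?_
  rw [dist_zero_right, dist_zero_right, dist_eq_norm]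
  linarith [norm_sub_le x y]

end IsBallIsometry_s12

theorem IsBallIsometry_s12.exists_affineMap_extension {f : E → F} {x₀ : E} {y₀ : F}
    (hf : IsBallIsometry_s12 f x₀ y₀ r) (hr : 0 < r) :
    ∃ A : E →ᵃ[ℝ] F, Surjective A ∧ Isometry A ∧ EqOn A f (closedBall x₀ r) := by
  have hg := hf.translate
  let A₀ : E →ᵃ[ℝ] F := AffineMap.ofMapMidpoint _ (hg.map_midpoint_ballExtension hr)
    (hg.isometry_ballExtension hr).continuous
  set A := A₀.comp (AffineMap.id ℝ E - AffineMap.const ℝ E x₀) + AffineMap.const ℝ E y₀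
  have hA : ∀ x, A x = ballExtension (fun u => f (u + x₀) - y₀) r (x - x₀) + y₀ := fun _ => rfl
  refine ⟨A, fun w => ?_, Isometry.of_dist_eq fun x y => ?_, fun x hx => ?_⟩
  · obtain ⟨u, hu⟩ := hg.surjective_ballExtension hr (w - y₀)
    exact ⟨u + x₀, by rw [hA, add_sub_cancel_right, hu, sub_add_cancel]⟩
  · rw [hA, hA, dist_add_right, (hg.isometry_ballExtension hr).dist_eq, dist_sub_right]
  · have hx' : x - x₀ ∈ closedBall 0 r := by
      rwa [mem_closedBall_zero_iff, ← mem_closedBall_iff_norm]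
    rw [hA, hg.eqOn_ballExtension hr hx', sub_add_cancel, sub_add_cancel]

end Extension

theorem eq_of_map_combo_of_eqOn_closedBall {E F : Type*} [NormedAddCommGroup E] [NormedSpace ℝ E]
    [AddCommGroup F] [Module ℝ F] {φ ψ : E → F} {x₀ : E} {r : ℝ} (hr : 0 < r)
    (hφ : ∀ x y : E, ∀ t ∈ Icc (0 : ℝ) 1, φ ((1 - t) • x + t • y) = (1 - t) • φ x + t • φ y)
    (hψ : ∀ x y : E, ∀ t ∈ Icc (0 : ℝ) 1, ψ ((1 - t) • x + t • y) = (1 - t) • ψ x + t • ψ y)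
    (h : EqOn φ ψ (closedBall x₀ r)) : φ = ψ := by
  funext x
  -- `x` is determined by a point of the segment `[x₀, x]` lying in the ball
  set t := r / (r + ‖x - x₀‖)
  have hden : 0 < r + ‖x - x₀‖ := by positivity
  have ht : t ∈ Icc (0 : ℝ) 1 :=
    ⟨by positivity, (div_le_one hden).2 (le_add_of_nonneg_right (norm_nonneg _))⟩
  have hp : (1 - t) • x₀ + t • x ∈ closedBall x₀ r := by
    rw [mem_closedBall_iff_norm, show (1 - t) • x₀ + t • x - x₀ = t • (x - x₀) by module,
      norm_smul, Real.norm_of_nonneg ht.1, div_mul_eq_mul_div, div_le_iff₀ hden]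
    nlinarith [norm_nonneg (x - x₀)]
  have key := h hp
  rw [hφ _ _ t ht, hψ _ _ t ht, h (mem_closedBall_self hr.le)] at key
  exact smul_right_injective F (ne_of_gt (by positivity)) (add_left_cancel key)

theorem mankiewicz_extension_general
    {X Y : Type*} [NormedAddCommGroup X] [NormedSpace ℝ X]
    [NormedAddCommGroup Y] [NormedSpace ℝ Y]
    (x₀ : X) (y₀ : Y) (r : ℝ) (hr : 0 < r) (f : X → Y)
    (hsurj : ∀ w ∈ Metric.closedBall y₀ r, ∃ u ∈ Metric.closedBall x₀ r, f u = w)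
    (hiso : ∀ u ∈ Metric.closedBall x₀ r, ∀ v ∈ Metric.closedBall x₀ r,
      ‖f u - f v‖ = ‖u - v‖) :
    ∃! F : X → Y,
      Function.Surjective F ∧
      (∀ x y : X, ∀ t ∈ Set.Icc (0 : ℝ) 1,
        F ((1 - t) • x + t • y) = (1 - t) • F x + t • F y) ∧
      (∀ x y : X, ‖F x - F y‖ = ‖x - y‖) ∧
      (∀ x ∈ Metric.closedBall x₀ r, F x = f x) := by
  have hf : IsBallIsometry_s12 f x₀ y₀ r :=
    ⟨fun u hu v hv => by simpa only [dist_eq_norm] using hiso u hu v hv, hsurj⟩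
  obtain ⟨A, hA_surj, hA_isom, hA_eq⟩ := hf.exists_affineMap_extension hr
  have hA_combo : ∀ x y : X, ∀ t ∈ Set.Icc (0 : ℝ) 1,
      A ((1 - t) • x + t • y) = (1 - t) • A x + t • A y :=
    fun _ _ _ _ => Convex.combo_affine_apply (sub_add_cancel 1 _)
  refine ⟨A, ⟨hA_surj, hA_combo, fun x y => by simpa only [dist_eq_norm] using hA_isom.dist_eq x y,
    fun x hx => hA_eq hx⟩, fun G ⟨_, hG_combo, _, hG_eq⟩ => ?_⟩
  exact eq_of_map_combo_of_eqOn_closedBall hr hG_combo hA_combo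
    fun x hx => (hG_eq x hx).trans (hA_eq hx).symm

/-- Mankiewicz's theorem: a surjective distance-preserving map between closed balls of
the same radius in real Banach spaces extends uniquely to an affine isometry of the
whole spaces. -/
theorem mankiewicz_extension
    {X Y : Type*} [NormedAddCommGroup X] [NormedSpace ℝ X] [CompleteSpace X]
    [NormedAddCommGroup Y] [NormedSpace ℝ Y] [CompleteSpace Y]
    (x₀ : X) (y₀ : Y) (r : ℝ) (hr : 0 < r) (f : X → Y)
    (hmaps : ∀ u ∈ Metric.closedBall x₀ r, f u ∈ Metric.closedBall y₀ r)
    (hsurj : ∀ w ∈ Metric.closedBall y₀ r, ∃ u ∈ Metric.closedBall x₀ r, f u = w)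
    (hiso : ∀ u ∈ Metric.closedBall x₀ r, ∀ v ∈ Metric.closedBall x₀ r,
      ‖f u - f v‖ = ‖u - v‖) :
    ∃! F : X → Y,
      Function.Surjective F ∧
      (∀ x y : X, ∀ t ∈ Set.Icc (0 : ℝ) 1,
        F ((1 - t) • x + t • y) = (1 - t) • F x + t • F y) ∧
      (∀ x y : X, ‖F x - F y‖ = ‖x - y‖) ∧
      (∀ x ∈ Metric.closedBall x₀ r, F x = f x) :=
  mankiewicz_extension_general x₀ y₀ r hr f hsurj hiso
end
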